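/- arXiv:1904.00246 — 13 statements merged into one kernel-verified Lean document; each statement's English description precedes it below -/
import Mathlib

section
/- For every integer t ≥ 2, all positive integers r_1, …, r_t, and every integer n with n ≥ max_i r_i + 1 + Σ_{i=1}^t (r_i − 1), every t-coloring χ of E(K_n) contains, for some color i ∈ {1,…,t}, a matching of size r_i in color i. -/
/-!
Fix an upper bound `m` for `r` on the colors that occur inside the vertex set `A`, and
induct on `m`. Suppose every color `c` occurring in `A` gets a nonempty `c`-colored matching
with fewer than `r c` edges, all inside a set `S ⊆ A` with at most one vertex more than the
total number of these edges. Deleting `S` and lowering each `r c` by the size of its matching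
then lowers `m` by one and keeps `#A ≥ m + 1 + ∑ (r c - 1)`, and the matchings found in
`A \ S` extend by those in `S`.

Such an `S` is built one color at a time (Builder's strategy). An edge `xy` of a new color is
added with its endpoints; if that overspends the vertex budget, the lost vertex is recovered
either by an edge from some `u ∈ S` to `x` or `y` whose color class does not yet cover `u`,
or by an alternating path `x u u' y` through a matching edge `uu'`. If neither exists, each
of the `2 #S` pairs `(u, z) ∈ S × {x, y}` is charged to an edge through `u` of the color of
`uz`, and no edge is charged more than twice, so the budget had room for `xy` after all.
-/

/-- A matching of size `r` in color `i`: a set of `r` pairwise vertex-disjoint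
(non-loop) edges of `K_n`, each assigned color `i` by `χ`. -/
def IsColorMatching {n t : ℕ} (χ : Sym2 (Fin n) → Fin t) (i : Fin t) (r : ℕ) : Prop :=
  ∃ M : Finset (Sym2 (Fin n)), M.card = r ∧
    (∀ e ∈ M, ¬ e.IsDiag ∧ χ e = i) ∧
    (∀ e ∈ M, ∀ f ∈ M, e ≠ f → ∀ v : Fin n, v ∈ e → v ∉ f)

open Finset

namespace CockayneLorimer

variable {V ι : Type*}

structure IsColorwiseMatching (χ : Sym2 V → ι) (S : Finset V) (E : Finset (Sym2 V)) : Prop where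
  not_isDiag : ∀ e ∈ E, ¬e.IsDiag
  mem : ∀ e ∈ E, ∀ v ∈ e, v ∈ S
  disjoint : ∀ e ∈ E, ∀ f ∈ E, e ≠ f → χ e = χ f → ∀ v ∈ e, v ∉ f

namespace IsColorwiseMatching

variable {χ : Sym2 V → ι} {S T : Finset V} {E F : Finset (Sym2 V)}

theorem empty : IsColorwiseMatching χ S ∅ :=
  ⟨by simp, by simp, by simp⟩

theorem mono (hE : IsColorwiseMatching χ S E) (hST : S ⊆ T) : IsColorwiseMatching χ T E :=
  ⟨hE.not_isDiag, fun e he v hv => hST (hE.mem e he v hv), hE.disjoint⟩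

theorem subset (hE : IsColorwiseMatching χ S E) (hFE : F ⊆ E) : IsColorwiseMatching χ S F :=
  ⟨fun e he => hE.not_isDiag e (hFE he), fun e he => hE.mem e (hFE he),
    fun e he f hf => hE.disjoint e (hFE he) f (hFE hf)⟩

theorem notMem_of_notMem (hE : IsColorwiseMatching χ S E) {v : V} {e : Sym2 V} (hv : v ∉ S)
    (hve : v ∈ e) : e ∉ E :=
  fun he => hv (hE.mem e he v hve)

theorem disjoint_of_disjoint (hE : IsColorwiseMatching χ S E) (hF : IsColorwiseMatching χ T F)
    (hST : Disjoint S T) : Disjoint E F := by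
  refine disjoint_left.2 fun e heE heF => ?_
  induction e using Sym2.ind with
  | _ a b => exact disjoint_left.1 hST (hE.mem _ heE a (by simp)) (hF.mem _ heF a (by simp))

variable [DecidableEq V]

theorem insert_edge (hE : IsColorwiseMatching χ S E) {a b : V} (hab : a ≠ b) (ha : a ∈ S)
    (hb : b ∈ S) (hfree : ∀ f ∈ E, χ f = χ s(a, b) → a ∉ f ∧ b ∉ f) :
    IsColorwiseMatching χ S (insert s(a, b) E) := by
  refine ⟨?_, ?_, ?_⟩
  · simp only [mem_insert, forall_eq_or_imp, Sym2.mk_isDiag_iff]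
    exact ⟨hab, hE.not_isDiag⟩
  · simp only [mem_insert, forall_eq_or_imp, Sym2.mem_iff, forall_eq]
    exact ⟨⟨ha, hb⟩, hE.mem⟩
  · have hfree' : ∀ f ∈ E, χ f = χ s(a, b) → ∀ v ∈ s(a, b), v ∉ f := by
      intro f hf hc v hv
      rcases Sym2.mem_iff.1 hv with rfl | rfl
      exacts [(hfree f hf hc).1, (hfree f hf hc).2]
    intro e he f hf hef hc
    rcases mem_insert.1 he with rfl | he <;> rcases mem_insert.1 hf with rfl | hf
    · exact absurd rfl hef
    · exact hfree' f hf hc.symm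
    · exact fun v hv hvf => hfree' e he hc v hvf hv
    · exact hE.disjoint e he f hf hef hc

theorem union (hE : IsColorwiseMatching χ S E) (hF : IsColorwiseMatching χ T F)
    (hST : Disjoint S T) : IsColorwiseMatching χ (S ∪ T) (E ∪ F) := by
  have hEF : ∀ e ∈ E, ∀ f ∈ F, ∀ v ∈ e, v ∉ f := fun e he f hf v hve hvf =>
    disjoint_left.1 hST (hE.mem e he v hve) (hF.mem f hf v hvf)
  refine ⟨?_, ?_, ?_⟩
  · simp only [mem_union]
    rintro e (he | he)
    exacts [hE.not_isDiag e he, hF.not_isDiag e he]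
  · intro e he v hv
    rcases mem_union.1 he with he | he
    exacts [mem_union_left T (hE.mem e he v hv), mem_union_right S (hF.mem e he v hv)]
  · simp only [mem_union]
    rintro e (he | he) f (hf | hf) hef hc
    · exact hE.disjoint e he f hf hef hc
    · exact hEF e he f hf
    · exact fun v hve hvf => hEF f hf e he v hvf hve
    · exact hF.disjoint e he f hf hef hc

theorem augment (hE : IsColorwiseMatching χ S E) {u u' x y : V} (hg : s(u, u') ∈ E)
    (hx : x ∉ S) (hy : y ∉ S) (hxy : x ≠ y)
    (hux : χ s(u, x) = χ s(u, u')) (hu'y : χ s(u', y) = χ s(u, u')) :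
    IsColorwiseMatching χ (insert x (insert y S))
      (insert s(u, x) (insert s(u', y) (E.erase s(u, u')))) := by
  have hu : u ∈ S := hE.mem _ hg u (Sym2.mem_mk_left u u')
  have hu' : u' ∈ S := hE.mem _ hg u' (Sym2.mem_mk_right u u')
  have hSxy : S ⊆ insert x (insert y S) := (subset_insert _ _).trans (subset_insert _ _)
  have hrest := (hE.subset (erase_subset s(u, u') E)).mono hSxy
  have hfree : ∀ f ∈ E.erase s(u, u'), χ f = χ s(u, u') → u ∉ f ∧ u' ∉ f := by
    intro f hf hc
    have hne := ne_of_mem_erase hf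
    exact ⟨hE.disjoint _ hg f (mem_of_mem_erase hf) hne.symm hc.symm u (by simp),
      hE.disjoint _ hg f (mem_of_mem_erase hf) hne.symm hc.symm u' (by simp)⟩
  refine (hrest.insert_edge ?_ ?_ ?_ ?_).insert_edge ?_ ?_ ?_ ?_
  · rintro rfl; exact hy hu'
  · simp [hu']
  · simp
  · intro f hf hc
    rw [hu'y] at hc
    exact ⟨(hfree f hf hc).2, fun h => hy (hE.mem f (mem_of_mem_erase hf) y h)⟩
  · rintro rfl; exact hx hu
  · simp [hu]
  · simp
  · intro f hf hc
    rw [hux] at hc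
    rcases mem_insert.1 hf with rfl | hf
    · refine ⟨?_, ?_⟩ <;> simp only [Sym2.mem_iff, not_or]
      · exact ⟨fun h => (hE.not_isDiag _ hg) (by simp [h]), fun h => hy (h ▸ hu)⟩
      · exact ⟨fun h => hx (h ▸ hu'), hxy⟩
    · exact ⟨(hfree f hf hc).1, fun h => hx (hE.mem f (mem_of_mem_erase hf) x h)⟩

theorem card_augment (hE : IsColorwiseMatching χ S E) {u u' x y : V} (hg : s(u, u') ∈ E)
    (hx : x ∉ S) (hy : y ∉ S) (hxy : x ≠ y) :
    #(insert s(u, x) (insert s(u', y) (E.erase s(u, u')))) = #E + 1 := by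
  have hu' : u' ∈ S := hE.mem _ hg u' (Sym2.mem_mk_right u u')
  have hne : s(u, x) ≠ s(u', y) := fun h => by
    have : x ∈ s(u', y) := h ▸ Sym2.mem_mk_right u x
    rcases Sym2.mem_iff.1 this with rfl | rfl
    exacts [hx hu', hxy rfl]
  rw [card_insert_of_notMem, card_insert_of_notMem, card_erase_of_mem hg]
  · have := card_pos.2 ⟨_, hg⟩
    omega
  · exact fun h => hE.notMem_of_notMem hy (Sym2.mem_mk_right u' y) (mem_of_mem_erase h)
  · rw [mem_insert, not_or]
    exact ⟨hne, fun h => hE.notMem_of_notMem hx (Sym2.mem_mk_right u x) (mem_of_mem_erase h)⟩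

end IsColorwiseMatching

section Counting

variable [DecidableEq V] [DecidableEq ι]

theorem card_le_two_of_not_cross {α β : Type*} [DecidableEq α] [DecidableEq β]
    {B : Finset (α × β)} {a b : α} {x y : β}
    (hB : ∀ p ∈ B, (p.1 = a ∨ p.1 = b) ∧ (p.2 = x ∨ p.2 = y))
    (h₁ : ¬((a, x) ∈ B ∧ (b, y) ∈ B)) (h₂ : ¬((a, y) ∈ B ∧ (b, x) ∈ B)) : #B ≤ 2 := by
  have hsplit : B ⊆ {p ∈ B | p = (a, x) ∨ p = (b, y)} ∪ {p ∈ B | p = (a, y) ∨ p = (b, x)} := by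
    intro p hp
    have := hB p hp
    simp only [mem_union, mem_filter, Prod.ext_iff]
    tauto
  have hdiag : #{p ∈ B | p = (a, x) ∨ p = (b, y)} ≤ 1 := by
    refine card_le_one.2 fun p hp q hq => ?_
    simp only [mem_filter] at hp hq
    grind
  have hanti : #{p ∈ B | p = (a, y) ∨ p = (b, x)} ≤ 1 := by
    refine card_le_one.2 fun p hp q hq => ?_
    simp only [mem_filter] at hp hq
    grind
  calc #B ≤ _ := card_le_card hsplit
    _ ≤ _ := card_union_le _ _
    _ ≤ 2 := by omega

theorem card_le_card_of_forall_exists_mem {χ : Sym2 V → ι} {S : Finset V}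
    {E : Finset (Sym2 V)} {x y : V} (hxy : x ≠ y)
    (hcov : ∀ u ∈ S, ∀ z ∈ ({x, y} : Finset V), ∃ g ∈ E, χ g = χ s(u, z) ∧ u ∈ g)
    (hcross : ∀ u u', s(u, u') ∈ E → χ s(u, x) = χ s(u, u') → χ s(u', y) ≠ χ s(u, u')) :
    #S ≤ #E := by
  let R : V × V → Sym2 V → Prop := fun p g => p.1 ∈ g ∧ χ g = χ s(p.1, p.2)
  have hcount := card_mul_le_card_mul R (s := S ×ˢ {x, y}) (t := E) (m := 1) (n := 2)
    (fun p hp => by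
      obtain ⟨hu, hz⟩ := mem_product.1 hp
      obtain ⟨g, hg, hR⟩ := hcov p.1 hu p.2 hz
      exact card_pos.2 ⟨g, mem_filter.2 ⟨hg, hR.2, hR.1⟩⟩)
    (fun g hg => by
      induction g using Sym2.ind with
      | _ a b =>
        refine card_le_two_of_not_cross (a := a) (b := b) (x := x) (y := y) (fun p hp => ?_) ?_ ?_
        · simp only [bipartiteBelow, mem_filter, mem_product, mem_insert, mem_singleton,
            Sym2.mem_iff, R] at hp
          exact ⟨hp.2.1, hp.1.2⟩
        · simp only [bipartiteBelow, mem_filter, R]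
          exact fun h => hcross a b hg h.1.2.2.symm h.2.2.2.symm
        · simp only [bipartiteBelow, mem_filter, R]
          rw [Sym2.eq_swap] at hg ⊢
          exact fun h => hcross b a hg h.2.2.2.symm h.1.2.2.symm)
  rw [card_product, card_pair hxy] at hcount
  omega

end Counting

variable [DecidableEq ι] (χ : Sym2 V → ι) (r : ι → ℕ)

def HasLargeMatching (A : Finset V) : Prop :=
  ∃ E, IsColorwiseMatching χ A E ∧ ∃ c, r c ≤ #{e ∈ E | χ e = c}

/-- Deleting `S` from `A` and lowering each `r c` by the number of `c`-colored edges of `E`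
costs at most one vertex more than it saves in `∑ (r c - 1)`. -/
structure IsReduction (A S : Finset V) (E : Finset (Sym2 V)) : Prop where
  subset : S ⊆ A
  colorwiseMatching : IsColorwiseMatching χ S E
  card_filter_lt : ∀ c, #{e ∈ E | χ e = c} < r c
  card_le : #S ≤ #E + 1

variable {χ r} {A S : Finset V} {E : Finset (Sym2 V)}

theorem hasLargeMatching_or_isReduction (hSA : S ⊆ A) (hE : IsColorwiseMatching χ S E)
    (hcard : #S ≤ #E + 1) : HasLargeMatching χ r A ∨ IsReduction χ r A S E := by
  by_cases h : ∀ c, #{e ∈ E | χ e = c} < r c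
  · exact Or.inr ⟨hSA, hE, h, hcard⟩
  · push Not at h
    exact Or.inl ⟨E, hE.mono hSA, h⟩

theorem HasLargeMatching.exists_monochromatic (h : HasLargeMatching χ r A) :
    ∃ c, ∃ M, IsColorwiseMatching χ A M ∧ (∀ e ∈ M, χ e = c) ∧ #M = r c := by
  obtain ⟨E, hE, c, hc⟩ := h
  obtain ⟨M, hME, hM⟩ := exists_subset_card_eq hc
  exact ⟨c, M, hE.subset (hME.trans (filter_subset _ _)), fun e he => (mem_filter.1 (hME he)).2,
    hM⟩

theorem IsReduction.sum_sub_one_add_card [Fintype ι] (h : IsReduction χ r A S E) :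
    ∑ c, (r c - #{e ∈ E | χ e = c} - 1) + #E = ∑ c, (r c - 1) := by
  rw [card_eq_sum_card_fiberwise (f := χ) (t := univ) (fun e _ => mem_coe.2 (mem_univ _)),
    ← sum_add_distrib]
  exact sum_congr rfl fun c _ => by have := h.card_filter_lt c; omega

variable [DecidableEq V]

theorem hasLargeMatching_or_exists_isReduction_insert (hSA : S ⊆ A) {a b : V} (ha : a ∈ A)
    (hb : b ∈ A) (hab : a ≠ b) {F : Finset (Sym2 V)}
    (hE : IsColorwiseMatching χ (insert a (insert b S)) E) (hk : ∀ e ∈ E, χ e ≠ χ s(a, b))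
    (hcard : #(insert a (insert b S)) ≤ #E + 2) (himage : F.image χ ⊆ E.image χ) :
    HasLargeMatching χ r A ∨
      ∃ S' E', IsReduction χ r A S' E' ∧ insert (χ s(a, b)) (F.image χ) ⊆ E'.image χ := by
  have hE' := hE.insert_edge hab (mem_insert_self a _) (mem_insert_of_mem (mem_insert_self b S))
    fun f hf hc => absurd hc (hk f hf)
  have hcard' : #(insert a (insert b S)) ≤ #(insert s(a, b) E) + 1 := by
    rw [card_insert_of_notMem fun h => hk _ h rfl]
    omega
  refine (hasLargeMatching_or_isReduction (insert_subset ha (insert_subset hb hSA)) hE'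
    hcard').imp_right fun h => ⟨_, _, h, ?_⟩
  rw [image_insert]
  exact insert_subset_insert _ himage

theorem IsReduction.extend_of_lt (h : IsReduction χ r A S E) {x y : V} (hx : x ∈ A) (hy : y ∈ A)
    (hxy : x ≠ y) (hk : ∀ e ∈ E, χ e ≠ χ s(x, y)) (hxS : x ∉ S) (hyS : y ∉ S) (hlt : #E < #S) :
    HasLargeMatching χ r A ∨
      ∃ S' E', IsReduction χ r A S' E' ∧ insert (χ s(x, y)) (E.image χ) ⊆ E'.image χ := by
  have hE := h.colorwiseMatching
  have hcard := h.card_le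
  have hSxy : S ⊆ insert x (insert y S) := (subset_insert _ _).trans (subset_insert _ _)
  have hcard_xy : #(insert x (insert y S)) ≤ #S + 2 := by
    have := card_insert_le x (insert y S)
    have := card_insert_le y S
    omega
  by_cases hfree : ∃ u ∈ S, ∃ z ∈ ({x, y} : Finset V), ∀ f ∈ E, χ f = χ s(u, z) → u ∉ f
  · obtain ⟨u, hu, z, hz, hfree⟩ := hfree
    obtain ⟨hzS, hzA, hzSxy⟩ : z ∉ S ∧ z ∈ A ∧ z ∈ insert x (insert y S) := by
      rcases mem_insert.1 hz with rfl | hz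
      · exact ⟨hxS, hx, mem_insert_self _ _⟩
      · rw [mem_singleton.1 hz]
        exact ⟨hyS, hy, mem_insert_of_mem (mem_insert_self _ _)⟩
    have huz : u ≠ z := fun h => hzS (h ▸ hu)
    by_cases hc : χ s(u, z) = χ s(x, y)
    · rw [← hc]
      refine hasLargeMatching_or_exists_isReduction_insert h.subset (h.subset hu) hzA huz
        (hE.mono ((subset_insert _ _).trans (subset_insert _ _))) (hc ▸ hk) ?_ subset_rfl
      rw [insert_eq_of_mem (mem_insert_of_mem hu)]
      have := card_insert_le z S
      omega
    · refine hasLargeMatching_or_exists_isReduction_insert h.subset hx hy hxy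
        ((hE.mono hSxy).insert_edge huz (hSxy hu) hzSxy
          fun f hf hcf => ⟨hfree f hf hcf, fun hzf => hzS (hE.mem f hf z hzf)⟩)
        (forall_mem_insert _ _ _ |>.2 ⟨hc, hk⟩) ?_ ?_
      · rw [card_insert_of_notMem (hE.notMem_of_notMem hzS (Sym2.mem_mk_right u z))]
        omega
      · rw [image_insert]
        exact subset_insert _ _
  by_cases haug : ∃ u u', s(u, u') ∈ E ∧ χ s(u, x) = χ s(u, u') ∧ χ s(u', y) = χ s(u, u')
  · obtain ⟨u, u', hg, hux, hu'y⟩ := haug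
    refine hasLargeMatching_or_exists_isReduction_insert h.subset hx hy hxy
      (hE.augment hg hxS hyS hxy hux hu'y) ?_ ?_ ?_
    · simp only [mem_insert, forall_eq_or_imp, hux, hu'y]
      exact ⟨hk _ hg, hk _ hg, fun e he => hk e (mem_of_mem_erase he)⟩
    · rw [hE.card_augment hg hxS hyS hxy]
      omega
    · intro c hc
      obtain ⟨e, he, rfl⟩ := mem_image.1 hc
      by_cases heg : e = s(u, u')
      · exact mem_image.2 ⟨s(u, x), mem_insert_self _ _, heg ▸ hux⟩
      · exact mem_image_of_mem χ (mem_insert_of_mem (mem_insert_of_mem (mem_erase.2 ⟨heg, he⟩)))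
  push Not at hfree haug
  exact absurd (card_le_card_of_forall_exists_mem hxy hfree haug) (not_le.2 hlt)

theorem IsReduction.extend (h : IsReduction χ r A S E) {x y : V} (hx : x ∈ A) (hy : y ∈ A)
    (hxy : x ≠ y) (hk : ∀ e ∈ E, χ e ≠ χ s(x, y)) :
    HasLargeMatching χ r A ∨
      ∃ S' E', IsReduction χ r A S' E' ∧ insert (χ s(x, y)) (E.image χ) ⊆ E'.image χ := by
  by_cases hslack : x ∉ S ∧ y ∉ S ∧ #E < #S
  · exact h.extend_of_lt hx hy hxy hk hslack.1 hslack.2.1 hslack.2.2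
  have hSxy : S ⊆ insert x (insert y S) := (subset_insert _ _).trans (subset_insert _ _)
  refine hasLargeMatching_or_exists_isReduction_insert h.subset hx hy hxy
    (h.colorwiseMatching.mono hSxy) hk ?_ subset_rfl
  have := h.card_le
  have := card_insert_le x (insert y S)
  have := card_insert_le y S
  by_cases hxS : x ∈ S
  · rw [insert_eq_of_mem (mem_insert_of_mem hxS)]
    omega
  by_cases hyS : y ∈ S
  · rw [insert_eq_of_mem hyS]
    have := card_insert_le x S
    omega
  have := not_lt.1 fun hlt => hslack ⟨hxS, hyS, hlt⟩
  omega

theorem exists_isReduction (hr : ∀ c, 1 ≤ r c) (K : Finset ι)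
    (hK : ∀ k ∈ K, ∃ x ∈ A, ∃ y ∈ A, x ≠ y ∧ χ s(x, y) = k) :
    HasLargeMatching χ r A ∨ ∃ S E, IsReduction χ r A S E ∧ K ⊆ E.image χ := by
  induction K using Finset.induction_on with
  | empty =>
    refine Or.inr ⟨∅, ∅, ⟨empty_subset A, .empty, fun c => ?_, by simp⟩, empty_subset _⟩
    rw [filter_empty, card_empty]
    exact hr c
  | insert k K _ ih =>
    rcases ih fun k' hk' => hK k' (mem_insert_of_mem hk') with hwin | ⟨S, E, h, hKE⟩
    · exact Or.inl hwin
    by_cases hkE : k ∈ E.image χ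
    · exact Or.inr ⟨S, E, h, insert_subset hkE hKE⟩
    obtain ⟨x, hx, y, hy, hxy, rfl⟩ := hK k (mem_insert_self k K)
    exact (h.extend hx hy hxy fun e he hc => hkE (hc ▸ mem_image_of_mem χ he)).imp_right
      fun ⟨S', E', h', him⟩ => ⟨S', E', h', (insert_subset_insert _ hKE).trans him⟩

theorem IsReduction.hasLargeMatching (h : IsReduction χ r A S E)
    (h' : HasLargeMatching χ (fun c => r c - #{e ∈ E | χ e = c}) (A \ S)) :
    HasLargeMatching χ r A := by
  obtain ⟨E₁, hE₁, c, hc⟩ := h'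
  refine ⟨E₁ ∪ E, ?_, c, ?_⟩
  · rw [← sdiff_union_of_subset h.subset]
    exact hE₁.union h.colorwiseMatching sdiff_disjoint
  · rw [filter_union, card_union_of_disjoint (disjoint_filter_filter
      (hE₁.disjoint_of_disjoint h.colorwiseMatching sdiff_disjoint))]
    have := h.card_filter_lt c
    simp only at hc
    omega

theorem hasLargeMatching_of_edge {x y : V} (hx : x ∈ A) (hy : y ∈ A) (hxy : x ≠ y)
    (h : r (χ s(x, y)) ≤ 1) : HasLargeMatching χ r A := by
  refine ⟨{s(x, y)}, IsColorwiseMatching.empty.insert_edge hxy hx hy (by simp), χ s(x, y), ?_⟩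
  rwa [filter_singleton, if_pos rfl, card_singleton]

theorem hasLargeMatching_of_le_card [Fintype ι] (hr : ∀ c, 1 ≤ r c) {m : ℕ} (hm : 1 ≤ m)
    (hA : ∀ x ∈ A, ∀ y ∈ A, x ≠ y → r (χ s(x, y)) ≤ m)
    (hcard : m + 1 + ∑ c, (r c - 1) ≤ #A) : HasLargeMatching χ r A := by
  induction m, hm using Nat.le_induction generalizing A r with
  | base =>
    obtain ⟨x, hx, y, hy, hxy⟩ := one_lt_card.1 (by omega : 1 < #A)
    exact hasLargeMatching_of_edge hx hy hxy (hA x hx y hy hxy)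
  | succ m hm ih =>
    by_cases hone : ∃ x ∈ A, ∃ y ∈ A, x ≠ y ∧ r (χ s(x, y)) ≤ 1
    · obtain ⟨x, hx, y, hy, hxy, h⟩ := hone
      exact hasLargeMatching_of_edge hx hy hxy h
    rcases exists_isReduction hr (A.offDiag.image fun p => χ s(p.1, p.2)) (by
        simp only [mem_image, mem_offDiag]
        rintro _ ⟨p, ⟨hx, hy, hxy⟩, rfl⟩
        exact ⟨p.1, hx, p.2, hy, hxy, rfl⟩) with hwin | ⟨S, E, h, hcolors⟩
    · exact hwin
    have hlt := h.card_filter_lt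
    refine h.hasLargeMatching (ih (fun c => by have := hlt c; omega) (fun x hx y hy hxy => ?_) ?_)
    · rw [mem_sdiff] at hx hy
      obtain ⟨e, he, hce⟩ := mem_image.1 (hcolors (mem_image.2 ⟨(x, y), by simp [*], rfl⟩))
      have : 0 < #{e ∈ E | χ e = χ s(x, y)} := card_pos.2 ⟨e, mem_filter.2 ⟨he, hce⟩⟩
      have := hA x hx.1 y hy.1 hxy
      omega
    · have := h.sum_sub_one_add_card
      have := h.card_le
      have := card_le_card h.subset
      rw [card_sdiff_of_subset h.subset]
      omega

end CockayneLorimer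

open CockayneLorimer in
theorem cockayne_lorimer_existence_general (t : ℕ) (r : Fin t → ℕ)
    (hr : ∀ i, 1 ≤ r i) (n : ℕ)
    (hn : Finset.univ.sup r + 1 + ∑ i, (r i - 1) ≤ n)
    (χ : Sym2 (Fin n) → Fin t) :
    ∃ i : Fin t, IsColorMatching χ i (r i) := by
  have hsup : 1 ≤ univ.sup r := by
    have v : Fin n := ⟨0, by omega⟩
    exact (hr _).trans (le_sup (mem_univ (χ s(v, v))))
  have hlarge : HasLargeMatching χ r univ := hasLargeMatching_of_le_card hr hsup
    (fun _ _ _ _ _ => le_sup (mem_univ _)) (by rwa [card_univ, Fintype.card_fin])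
  obtain ⟨c, M, hM, hMc, hcard⟩ := hlarge.exists_monochromatic
  exact ⟨c, M, hcard, fun e he => ⟨hM.not_isDiag e he, hMc e he⟩,
    fun e he f hf hef => hM.disjoint e he f hf hef ((hMc e he).trans (hMc f hf).symm)⟩

/-- Existence direction of the Cockayne–Lorimer theorem: if
`n ≥ max_i r_i + 1 + ∑_i (r_i − 1)`, then every `t`-coloring of `E(K_n)` contains,
for some color `i`, a matching of size `r_i` in color `i`. -/
theorem cockayne_lorimer_existence (t : ℕ) (ht : 2 ≤ t) (r : Fin t → ℕ)
    (hr : ∀ i, 1 ≤ r i) (n : ℕ)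
    (hn : Finset.univ.sup r + 1 + ∑ i, (r i - 1) ≤ n)
    (χ : Sym2 (Fin n) → Fin t) :
    ∃ i : Fin t, IsColorMatching χ i (r i) :=
  cockayne_lorimer_existence_general t r hr n hn χ
end

section
/- For all integers t ≥ 2 and r ≥ 2, if n = (t+1)r − t, then there exists a t-coloring χ of E(K_n) such that for every color i ∈ {1,…,t} there is no matching of size r in color i. -/
/-- Sharpness direction of the Cockayne–Lorimer theorem: if `n = (t+1)r − t`, then
there is a `t`-coloring of `E(K_n)` with no monochromatic matching of size `r`
in any color. -/
theorem cockayne_lorimer_sharpness (t r : ℕ) (ht : 2 ≤ t) (hr : 2 ≤ r) (n : ℕ)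
    (hn : n = (t + 1) * r - t) :
    ∃ χ : Sym2 (Fin n) → Fin t, ∀ i : Fin t, ¬ IsColorMatching χ i r := by
  have ht0 : 0 < t := by omega
  have hr1 : 1 ≤ r - 1 := by omega
  have htn : t ≤ (t + 1) * r := by nlinarith
  have hn' : n = (t - 1) * (r - 1) + (2 * r - 1) := by
    subst hn
    zify [htn, show 1 ≤ t by omega, show 1 ≤ r by omega, show 1 ≤ 2 * r by omega]
    ring
  -- block index
  set b : Fin n → Fin t := fun v => ⟨min (v.val / (r - 1)) (t - 1), by omega⟩ with hb
  set χ : Sym2 (Fin n) → Fin t :=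
    Sym2.lift ⟨fun u v => min (b u) (b v), fun u v => min_comm _ _⟩ with hχ
  refine ⟨χ, ?_⟩
  rintro i ⟨M, hcard, hcol, hdisj⟩
  -- basic facts about colors of edges
  have key : ∀ e ∈ M, (∃ v ∈ e, b v = i) ∧ (∀ v ∈ e, i ≤ b v) := by
    intro e he
    obtain ⟨hnd, hc⟩ := hcol e he
    induction e using Sym2.ind with
    | _ u v =>
      have hc' : min (b u) (b v) = i := hc
      constructor
      · rcases min_cases (b u) (b v) with ⟨h1, _⟩ | ⟨h1, _⟩
        · exact ⟨u, by simp [Sym2.mem_iff], by rw [← hc', h1]⟩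
        · exact ⟨v, by simp [Sym2.mem_iff], by rw [← hc', h1]⟩
      · intro w hw
        rcases Sym2.mem_iff.mp hw with rfl | rfl
        · rw [← hc']; exact min_le_left _ _
        · rw [← hc']; exact min_le_right _ _
  by_cases hi : i.val < t - 1
  · -- color with a small block: every edge hits block A_i of size r-1
    have hpick : ∀ e ∈ M, ∃ v : Fin n, v ∈ e ∧
        i.val * (r - 1) ≤ v.val ∧ v.val < i.val * (r - 1) + (r - 1) := by
      intro e he
      obtain ⟨⟨v, hv, hbv⟩, _⟩ := key e he
      refine ⟨v, hv, ?_, ?_⟩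
      · have h1 : min (v.val / (r - 1)) (t - 1) = i.val := congrArg Fin.val hbv
        have hdiv : v.val / (r - 1) = i.val := by omega
        have h2 := Nat.div_mul_le_self v.val (r - 1)
        rw [hdiv] at h2; omega
      · have h1 : min (v.val / (r - 1)) (t - 1) = i.val := congrArg Fin.val hbv
        have hdiv : v.val / (r - 1) = i.val := by omega
        have h3 := (Nat.div_lt_iff_lt_mul (by omega : 0 < r - 1)).mp
          (by omega : v.val / (r - 1) < i.val + 1)
        have h4 : (i.val + 1) * (r - 1) = i.val * (r - 1) + (r - 1) := by ring
        omega
    choose f hf1 hf2 hf3 using hpick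
    have hle : M.card ≤ Fintype.card (Fin (r - 1)) := by
      apply Finset.card_le_card_of_injOn
        (f := fun e => if he : e ∈ M then
          (⟨(f e he).val - i.val * (r - 1), by
            have := hf2 e he; have := hf3 e he; omega⟩ : Fin (r - 1)) else ⟨0, by omega⟩)
      · intro e _; exact Finset.mem_univ _
      · intro e he e' he' h
        simp only [Finset.mem_coe] at he he'
        simp only [dif_pos he, dif_pos he'] at h
        by_contra hne
        have hveq : f e he = f e' he' := by
          have h1 := hf2 e he; have h2 := hf2 e' he'
          have h3 := Fin.val_eq_of_eq h
          simp only at h3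
          exact Fin.ext (by omega)
        exact hdisj e he e' he' hne (f e he) (hf1 e he) (hveq ▸ hf1 e' he')
    simp only [Fintype.card_fin, hcard] at hle
    omega
  · -- last color: all vertices of all edges lie in the last block of size 2r-1
    have hival : i.val = t - 1 := by have := i.isLt; omega
    have hvert : ∀ e ∈ M, ∀ v ∈ e, (t - 1) * (r - 1) ≤ v.val := by
      intro e he v hv
      obtain ⟨_, hall⟩ := key e he
      have h1 : i.val ≤ min (v.val / (r - 1)) (t - 1) := hall v hv
      have hd : t - 1 ≤ v.val / (r - 1) := by omega
      have := (Nat.le_div_iff_mul_le (by omega : 0 < r - 1)).mp hd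
      omega
    -- the vertex set of the matching
    set F : Sym2 (Fin n) → Finset (Fin n) := fun e => {e.out.1, e.out.2} with hF
    have houtF : ∀ e : Sym2 (Fin n), s(e.out.1, e.out.2) = e := fun e => Quot.out_eq e
    have hmemF : ∀ e : Sym2 (Fin n), ∀ v, v ∈ F e ↔ v ∈ e := by
      intro e v
      simp only [hF, Finset.mem_insert, Finset.mem_singleton]
      constructor
      · rintro (rfl | rfl)
        exacts [e.out_fst_mem, e.out_snd_mem]
      · intro hv
        rw [← houtF e] at hv
        exact Sym2.mem_iff.mp hv
    have hcardF : ∀ e ∈ M, (F e).card = 2 := by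
      intro e he
      obtain ⟨hnd, _⟩ := hcol e he
      have hne : e.out.1 ≠ e.out.2 := by
        intro h
        apply hnd
        rw [← houtF e, Sym2.mk_isDiag_iff]
        exact h
      simp [hF, Finset.card_insert_of_notMem, hne]
    set V : Finset (Fin n) := M.biUnion F with hV
    have hVcard : V.card = 2 * r := by
      rw [hV, Finset.card_biUnion]
      · rw [Finset.sum_congr rfl hcardF]; simp [hcard]; ring
      · intro e he e' he' hne
        simp only [Finset.disjoint_left]
        intro v hv hv'
        exact hdisj e he e' he' hne v ((hmemF e v).mp hv) ((hmemF e' v).mp hv')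
    -- but V injects into Fin (2r-1)
    have hVsub : ∀ v ∈ V, (t - 1) * (r - 1) ≤ v.val := by
      intro v hv
      obtain ⟨e, he, hve⟩ := Finset.mem_biUnion.mp hv
      exact hvert e he v ((hmemF e v).mp hve)
    have hle : V.card ≤ Fintype.card (Fin (2 * r - 1)) := by
      apply Finset.card_le_card_of_injOn
        (f := fun v => if hv : (t - 1) * (r - 1) ≤ v.val then
          (⟨v.val - (t - 1) * (r - 1), by have := v.isLt; omega⟩ : Fin (2 * r - 1))
          else ⟨0, by omega⟩)
      · intro v _; exact Finset.mem_univ _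
      · intro v hv v' hv' h
        simp only [Finset.mem_coe] at hv hv'
        simp only [dif_pos (hVsub v hv), dif_pos (hVsub v' hv')] at h
        have h3 := Fin.val_eq_of_eq h
        simp only at h3
        exact Fin.ext (by have := hVsub v hv; have := hVsub v' hv'; omega)
    simp only [Fintype.card_fin, hVcard] at hle
    omega
end

section
/- Let t ≥ 2 and r ≥ 2 be integers and n = (t+1)r − t. Suppose the vertex set of K_n is partitioned into sets V_1, …, V_t with |V_1| = 2r − 1 and |V_i| = r − 1 for all i ≥ 2, and define the t-coloring χ of E(K_n) by χ(xy) = max{ i : V_i ∩ {x,y} ≠ ∅ }. Then for every color i ∈ {1,…,t}, there is no matching of size r in color i under χ. -/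
open Finset

section Matching

variable {α : Type*} [DecidableEq α] {M : Finset (Sym2 α)}

theorem card_mul_le_card_of_vertex_disjoint
    (hM : ∀ e ∈ M, ∀ f ∈ M, e ≠ f → ∀ v : α, v ∈ e → v ∉ f)
    (S : Finset α) (m : ℕ) (hm : ∀ e ∈ M, m ≤ #{v ∈ S | v ∈ e}) : #M * m ≤ #S := by
  have hS : ∀ v ∈ S, #{e ∈ M | v ∈ e} ≤ 1 := by
    refine fun v _ ↦ card_le_one.mpr fun e he f hf ↦ ?_
    rw [mem_filter] at he hf
    by_contra hef
    exact hM e he.1 f hf.1 hef v he.2 hf.2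
  simpa using card_mul_le_card_mul (fun e v ↦ v ∈ e) hm hS

theorem two_le_card_filter_mem_of_not_isDiag {S : Finset α} {e : Sym2 α} (he : ¬e.IsDiag)
    (hS : ∀ v ∈ e, v ∈ S) : 2 ≤ #{v ∈ S | v ∈ e} := by
  induction e using Sym2.ind with
  | _ a b =>
    have hab : a ≠ b := by simpa using he
    calc 2 = #{a, b} := (card_pair hab).symm
      _ ≤ #{v ∈ S | v ∈ s(a, b)} := card_le_card fun v hv ↦ by
        rcases mem_insert.mp hv with rfl | hv
        · simpa using hS v (Sym2.mem_mk_left v b)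
        · rw [mem_singleton.mp hv]
          simpa using hS b (Sym2.mem_mk_right a b)

end Matching

section MaxColoring

variable {α ι : Type*} [LinearOrder ι] {p : α → ι} {χ : Sym2 α → ι}
  {e : Sym2 α} {i : ι}

theorem le_of_mem_of_max_coloring (hχ : ∀ x y, x ≠ y → χ s(x, y) = max (p x) (p y))
    (he : ¬e.IsDiag) (hi : χ e = i) {v : α} (hv : v ∈ e) : p v ≤ i := by
  induction e using Sym2.ind with
  | _ a b =>
    rw [← hi, hχ a b (by simpa using he)]
    rcases Sym2.mem_iff.mp hv with rfl | rfl
    · exact le_max_left _ _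
    · exact le_max_right _ _

theorem exists_mem_of_max_coloring (hχ : ∀ x y, x ≠ y → χ s(x, y) = max (p x) (p y))
    (he : ¬e.IsDiag) (hi : χ e = i) : ∃ v ∈ e, p v = i := by
  induction e using Sym2.ind with
  | _ a b =>
    rw [← hi, hχ a b (by simpa using he)]
    rcases max_choice (p a) (p b) with h | h
    · exact ⟨a, Sym2.mem_mk_left a b, h.symm⟩
    · exact ⟨b, Sym2.mem_mk_right a b, h.symm⟩

end MaxColoring

namespace IsColorMatching

variable {n t : ℕ} {p : Fin n → Fin t} {χ : Sym2 (Fin n) → Fin t} {i : Fin t} {r : ℕ}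

theorem le_card_fiber (hχ : ∀ x y, x ≠ y → χ s(x, y) = max (p x) (p y))
    (h : IsColorMatching χ i r) : r ≤ #{v | p v = i} := by
  obtain ⟨M, rfl, hcol, hdisj⟩ := h
  have hendpoint (e) (he : e ∈ M) : 1 ≤ #{v ∈ {v | p v = i} | v ∈ e} := by
    obtain ⟨v, hve, hv⟩ := exists_mem_of_max_coloring hχ (hcol e he).1 (hcol e he).2
    exact one_le_card.mpr ⟨v, by simp [hve, hv]⟩
  simpa using card_mul_le_card_of_vertex_disjoint hdisj _ 1 hendpoint

theorem two_mul_le_card_fiber_of_forall_le (hχ : ∀ x y, x ≠ y → χ s(x, y) = max (p x) (p y))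
    (hmin : ∀ j, i ≤ j) (h : IsColorMatching χ i r) : 2 * r ≤ #{v | p v = i} := by
  obtain ⟨M, rfl, hcol, hdisj⟩ := h
  rw [mul_comm]
  refine card_mul_le_card_of_vertex_disjoint hdisj _ 2 fun e he ↦ ?_
  refine two_le_card_filter_mem_of_not_isDiag (hcol e he).1 fun v hv ↦ ?_
  simpa using le_antisymm (le_of_mem_of_max_coloring hχ (hcol e he).1 (hcol e he).2 hv) (hmin _)

end IsColorMatching

theorem painter_coloring_no_matching_general (t r : ℕ) [NeZero t] (hr : 2 ≤ r)
    (n : ℕ)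
    (p : Fin n → Fin t)
    (h1 : (Finset.univ.filter (fun v => p v = 0)).card = 2 * r - 1)
    (hi : ∀ i : Fin t, i ≠ 0 → (Finset.univ.filter (fun v => p v = i)).card = r - 1)
    (χ : Sym2 (Fin n) → Fin t)
    (hχ : ∀ x y : Fin n, x ≠ y → χ s(x, y) = max (p x) (p y)) :
    ∀ i : Fin t, ¬ IsColorMatching χ i r := by
  intro i hmatch
  rcases eq_or_ne i 0 with rfl | hi0
  · have := hmatch.two_mul_le_card_fiber_of_forall_le hχ Fin.zero_le
    omega
  · have := hmatch.le_card_fiber hχ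
    rw [hi i hi0] at this
    omega

/-- With `n = (t+1)r − t` and the vertex set of `K_n` partitioned into parts
`V_1, …, V_t` (here `p v` is the index of the part containing `v`, and part `0`
plays the role of `V_1`) with `|V_1| = 2r − 1` and `|V_i| = r − 1` for `i ≥ 2`,
the coloring `χ(xy) = max{i : V_i ∩ {x,y} ≠ ∅} = max (p x) (p y)` has no
monochromatic matching of size `r` in any color. -/
theorem painter_coloring_no_matching (t r : ℕ) [NeZero t] (ht : 2 ≤ t) (hr : 2 ≤ r)
    (n : ℕ) (hn : n = (t + 1) * r - t)
    (p : Fin n → Fin t)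
    (h1 : (Finset.univ.filter (fun v => p v = 0)).card = 2 * r - 1)
    (hi : ∀ i : Fin t, i ≠ 0 → (Finset.univ.filter (fun v => p v = i)).card = r - 1)
    (χ : Sym2 (Fin n) → Fin t)
    (hχ : ∀ x y : Fin n, x ≠ y → χ s(x, y) = max (p x) (p y)) :
    ∀ i : Fin t, ¬ IsColorMatching χ i r :=
  painter_coloring_no_matching_general t r hr n p h1 hi χ hχ
end

section
/- Let t ≥ 2 and r ≥ 2 be integers and n = (t+1)r − t. Suppose the vertex set of K_n is partitioned into sets V_1, …, V_t with |V_1| = 2r − 1 and |V_i| = r − 1 for all i ≥ 2, and define the t-coloring χ of E(K_n) by χ(xy) = max{ i : V_i ∩ {x,y} ≠ ∅ }. For an edge e and a color c, let χ_{e,c} be the coloring that agrees with χ on every edge other than e and assigns color c to e. Then: (a) for every edge e not contained in V_1, the coloring χ_{e,1} contains a matching of size r in color 1; and (b) for every color c ≥ 2 and every edge e disjoint from V_c, the coloring χ_{e,c} contains a matching of size r in color c. -/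
open Finset Function

variable {n t : ℕ}

theorem isColorMatching_of_injective {ι : Type*} [Fintype ι] (χ : Sym2 (Fin n) → Fin t)
    (c : Fin t) {u v : ι → Fin n} (hu : Injective u) (hv : Injective v)
    (huv : ∀ i j, u i ≠ v j) (hχ : ∀ i, χ s(u i, v i) = c) :
    IsColorMatching χ c (Fintype.card ι) := by
  have hedge : Injective fun i => s(u i, v i) := by
    intro i j hij
    rcases Sym2.eq_iff.mp hij with ⟨h, -⟩ | ⟨h, -⟩
    · exact hu h
    · exact absurd h (huv i j)
  refine ⟨univ.image fun i => s(u i, v i), by rw [card_image_of_injective _ hedge, card_univ],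
    ?_, ?_⟩
  · simp only [mem_image, mem_univ, true_and, forall_exists_index, forall_apply_eq_imp_iff]
    exact fun i => ⟨Sym2.mk_isDiag_iff.not.mpr (huv i i), hχ i⟩
  · simp only [mem_image, mem_univ, true_and, forall_exists_index, forall_apply_eq_imp_iff]
    intro i j hne w hwi hwj
    have hij : i ≠ j := by rintro rfl; exact hne rfl
    rw [Sym2.mem_iff] at hwi hwj
    rcases hwi with rfl | rfl <;> rcases hwj with h | h
    exacts [hij (hu h), huv i j h, huv j i h.symm, hij (hv h)]

theorem isColorMatching_update_of_injective (χ : Sym2 (Fin n) → Fin t) (c : Fin t) {k : ℕ}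
    {u v : Fin k → Fin n} (hu : Injective u) (hv : Injective v) (huv : ∀ i j, u i ≠ v j)
    (hχ : ∀ i, χ s(u i, v i) = c) {x y : Fin n} (hxy : x ≠ y)
    (hx : ∀ i, u i ≠ x ∧ v i ≠ x) (hy : ∀ i, u i ≠ y ∧ v i ≠ y) :
    IsColorMatching (update χ s(x, y) c) c (k + 1) := by
  have hcons : ∀ i j,
      (Fin.cons x u : Fin (k + 1) → Fin n) i ≠ (Fin.cons y v : Fin (k + 1) → Fin n) j := by
    intro i j
    cases i using Fin.cases <;> cases j using Fin.cases
    exacts [hxy, (hx _).2.symm, (hy _).1, huv _ _]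
  simpa using isColorMatching_of_injective (update χ s(x, y) c) c
    (Fin.cons_injective_iff.mpr ⟨fun ⟨i, hi⟩ => (hx i).1 hi, hu⟩)
    (Fin.cons_injective_iff.mpr ⟨fun ⟨i, hi⟩ => (hy i).2 hi, hv⟩) hcons fun i => by
      cases i using Fin.cases with
      | zero => exact update_self _ _ _
      | succ i =>
        refine (update_of_ne ?_ _ _).trans (hχ i)
        simp only [Fin.cons_succ, ne_eq, Sym2.eq_iff, not_or, not_and]
        exact ⟨fun h => absurd h (hx i).1, fun h => absurd h (hy i).1⟩

section PartitionColoring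

variable [NeZero t] {p : Fin n → Fin t} {χ : Sym2 (Fin n) → Fin t}

theorem isColorMatching_update_zero_of_left_ne_zero
    (hχ : ∀ x y, x ≠ y → χ s(x, y) = max (p x) (p y)) {k : ℕ}
    (h0 : 2 * k + 1 ≤ #{v | p v = 0}) {x y : Fin n} (hxy : x ≠ y) (hx : p x ≠ 0) :
    IsColorMatching (update χ s(x, y) 0) 0 (k + 1) := by
  set V₀ : Finset (Fin n) := {v | p v = 0}
  obtain ⟨f, hf⟩ : ∃ f : Fin (k + k) ↪ Fin n, Set.range f ⊆ V₀.erase y := by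
    refine Embedding.exists_of_card_le_finset ?_
    have := pred_card_le_card_erase (s := V₀) (a := y)
    rw [Fintype.card_fin]
    omega
  have hfS : ∀ i, p (f i) = 0 ∧ f i ≠ y := fun i => by
    simpa [V₀, and_comm] using hf (Set.mem_range_self i)
  have hfx : ∀ i, f i ≠ x := fun i h => hx (h ▸ (hfS i).1)
  have hsplit : ∀ i j, f (Fin.castAdd k i) ≠ f (Fin.natAdd k j) := fun i j =>
    f.injective.ne (by simp only [ne_eq, Fin.ext_iff, Fin.val_castAdd, Fin.val_natAdd]; omega)
  refine isColorMatching_update_of_injective χ 0 (u := f ∘ Fin.castAdd k)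
    (v := f ∘ Fin.natAdd k) (f.injective.comp (Fin.castAdd_injective _ _))
    (f.injective.comp (Fin.natAdd_injective _ _)) hsplit (fun i => ?_) hxy
    (fun i => ⟨hfx _, hfx _⟩) (fun i => ⟨(hfS _).2, (hfS _).2⟩)
  rw [comp_apply, comp_apply, hχ _ _ (hsplit i i), (hfS _).1, (hfS _).1, max_self]

theorem isColorMatching_update_of_ne_zero (hχ : ∀ x y, x ≠ y → χ s(x, y) = max (p x) (p y))
    {c : Fin t} (hc : c ≠ 0) {k : ℕ} (hVc : k ≤ #{v | p v = c})
    (h0 : k + 2 ≤ #{v | p v = 0}) {x y : Fin n} (hxy : x ≠ y) (hx : p x ≠ c)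
    (hy : p y ≠ c) :
    IsColorMatching (update χ s(x, y) c) c (k + 1) := by
  set V₀ : Finset (Fin n) := {v | p v = 0}
  obtain ⟨f, hf⟩ : ∃ f : Fin k ↪ Fin n, Set.range f ⊆ ({v | p v = c} : Finset (Fin n)) :=
    Embedding.exists_of_card_le_finset (by rwa [Fintype.card_fin])
  obtain ⟨g, hg⟩ : ∃ g : Fin k ↪ Fin n, Set.range g ⊆ (V₀.erase x).erase y := by
    refine Embedding.exists_of_card_le_finset ?_
    have := pred_card_le_card_erase (s := V₀) (a := x)
    have := pred_card_le_card_erase (s := V₀.erase x) (a := y)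
    rw [Fintype.card_fin]
    omega
  have hfc : ∀ i, p (f i) = c := fun i => by simpa using hf (Set.mem_range_self i)
  have hg0 : ∀ i, p (g i) = 0 ∧ g i ≠ x ∧ g i ≠ y := fun i => by
    simpa [V₀, and_comm, and_assoc] using hg (Set.mem_range_self i)
  have hfg : ∀ i j, f i ≠ g j := fun i j h => hc ((hfc i).symm.trans (h ▸ (hg0 j).1))
  refine isColorMatching_update_of_injective χ c f.injective g.injective hfg (fun i => ?_) hxy
    (fun i => ⟨fun h => hx (h ▸ hfc i), (hg0 i).2.1⟩)
    (fun i => ⟨fun h => hy (h ▸ hfc i), (hg0 i).2.2⟩)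
  rw [hχ _ _ (hfg i i), hfc, (hg0 i).1]
  exact max_eq_left (Fin.zero_le c)

end PartitionColoring

theorem painter_coloring_recolor_matching_general (t r : ℕ) [NeZero t]
    (hr : 2 ≤ r) (n : ℕ)
    (p : Fin n → Fin t)
    (h1 : (Finset.univ.filter (fun v => p v = 0)).card = 2 * r - 1)
    (hi : ∀ i : Fin t, i ≠ 0 → (Finset.univ.filter (fun v => p v = i)).card = r - 1)
    (χ : Sym2 (Fin n) → Fin t)
    (hχ : ∀ x y : Fin n, x ≠ y → χ s(x, y) = max (p x) (p y)) :
    (∀ x y : Fin n, x ≠ y → ¬(p x = 0 ∧ p y = 0) →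
      IsColorMatching (Function.update χ s(x, y) 0) 0 r) ∧
    (∀ c : Fin t, c ≠ 0 → ∀ x y : Fin n, x ≠ y → p x ≠ c → p y ≠ c →
      IsColorMatching (Function.update χ s(x, y) c) c r) := by
  obtain ⟨k, rfl⟩ : ∃ k, r = k + 1 := ⟨r - 1, by omega⟩
  refine ⟨fun x y hxy hxy0 => ?_, fun c hc x y hxy hx hy => ?_⟩
  · have h0 : 2 * k + 1 ≤ #{v | p v = 0} := by omega
    rcases not_and_or.mp hxy0 with hx | hy
    · exact isColorMatching_update_zero_of_left_ne_zero hχ h0 hxy hx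
    · rw [Sym2.eq_swap]
      exact isColorMatching_update_zero_of_left_ne_zero hχ h0 hxy.symm hy
  · exact isColorMatching_update_of_ne_zero hχ hc (hi c hc).ge (by omega) hxy hx hy

/-- With `n = (t+1)r − t`, the partition coloring `χ(xy) = max (p x) (p y)`
(part `0` plays the role of `V_1`, and color `0` plays the role of color `1`):
(a) recoloring any edge not contained in `V_1` with color `1` creates a matching of
size `r` in color `1`; and (b) for any color `c ≥ 2`, recoloring any edge disjoint
from `V_c` with color `c` creates a matching of size `r` in color `c`. -/
theorem painter_coloring_recolor_matching (t r : ℕ) [NeZero t] (ht : 2 ≤ t)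
    (hr : 2 ≤ r) (n : ℕ) (hn : n = (t + 1) * r - t)
    (p : Fin n → Fin t)
    (h1 : (Finset.univ.filter (fun v => p v = 0)).card = 2 * r - 1)
    (hi : ∀ i : Fin t, i ≠ 0 → (Finset.univ.filter (fun v => p v = i)).card = r - 1)
    (χ : Sym2 (Fin n) → Fin t)
    (hχ : ∀ x y : Fin n, x ≠ y → χ s(x, y) = max (p x) (p y)) :
    (∀ x y : Fin n, x ≠ y → ¬(p x = 0 ∧ p y = 0) →
      IsColorMatching (Function.update χ s(x, y) 0) 0 r) ∧
    (∀ c : Fin t, c ≠ 0 → ∀ x y : Fin n, x ≠ y → p x ≠ c → p y ≠ c →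
      IsColorMatching (Function.update χ s(x, y) c) c r) :=
  painter_coloring_recolor_matching_general t r hr n p h1 hi χ hχ
end

section
/- Fix an integer t ≥ 2 and positive integers r_1, …, r_t. Let F be a forest (an acyclic simple graph with no isolated vertices) and let χ : E(F) → {1,…,t} be a proper edge-coloring of F (any two edges sharing a vertex receive different colors) such that for some color c ∈ {1,…,t}, every connected component of F contains an edge of color c. If |V(F)| ≥ max_i r_i + Σ_{i=1}^t (r_i − 1), then for some i ∈ {1,…,t}, F contains a matching of size r_i in color i. -/
/-!
Every finite graph satisfies `|V| ≤ |E| + #components`: each vertex other than a fixed root of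
its component is sent to the first edge of a shortest path towards that root, and this is
injective because distances to the root strictly decrease along such edges. Since every
component contains an edge of colour `c`, the components number at most the edges of colour `c`.
So if every colour class `i` had fewer than `r i` edges, then
`|V| ≤ ∑ (r i - 1) + (r c - 1) < max r + ∑ (r i - 1)`. Hence some colour class `i` has at least
`r i` edges, and any `r i` of them form a matching because the colouring is proper.
-/

open Finset

namespace SimpleGraph

variable {V : Type*} {G : SimpleGraph V}

lemma Reachable.exists_adj_dist_lt {u v : V} (h : G.Reachable u v) (hne : u ≠ v) :
    ∃ w, G.Adj u w ∧ G.dist w v < G.dist u v := by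
  obtain ⟨p, hp⟩ := h.exists_walk_length_eq_dist
  cases p with
  | nil => exact absurd rfl hne
  | cons hadj q =>
    refine ⟨_, hadj, (dist_le q).trans_lt ?_⟩
    rw [← hp, Walk.length_cons]
    omega

lemma card_le_card_edgeSet_add_card_connectedComponent [Finite V] :
    Nat.card V ≤ Nat.card G.edgeSet + Nat.card G.ConnectedComponent := by
  classical
  have := Fintype.ofFinite V
  have := Fintype.ofFinite G.ConnectedComponent
  let root : V → V := fun v => (G.connectedComponentMk v).out
  have hroot : ∀ v, G.Reachable v (root v) := fun v =>
    ConnectedComponent.exact (G.connectedComponentMk v).out_eq.symm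
  choose! parent hparent using fun v (hv : v ≠ root v) => (hroot v).exists_adj_dist_lt hv
  have hroots : #{v | v = root v} ≤ Fintype.card G.ConnectedComponent := by
    refine card_le_card_of_injOn G.connectedComponentMk (fun _ _ => mem_coe.2 (mem_univ _)) ?_
    intro v hv w hw hvw
    simp only [coe_filter, Set.mem_ofPred_eq, mem_univ, true_and] at hv hw
    rw [hv, hw]
    exact congrArg Quot.out hvw
  have hnonroots : #{v | v ≠ root v} ≤ #G.edgeFinset := by
    refine card_le_card_of_injOn (fun v => s(v, parent v)) (fun v hv => ?_) ?_
    · simp only [coe_filter, Set.mem_ofPred_eq, mem_univ, true_and] at hv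
      simpa using (hparent v hv).1
    intro v hv w hw hvw
    simp only [coe_filter, Set.mem_ofPred_eq, mem_univ, true_and] at hv hw
    rcases Sym2.eq_iff.1 hvw with ⟨rfl, -⟩ | ⟨hvw, hwv⟩
    · rfl
    -- then `v` and `w` are each other's parents, so each is strictly closer to the root
    have hsame : root v = root w := congrArg Quot.out
      (ConnectedComponent.sound (hwv ▸ (hparent v hv).1).reachable)
    have h₁ := (hparent v hv).2
    have h₂ := (hparent w hw).2
    rw [hwv, hsame] at h₁
    rw [← hvw] at h₂
    omega
  rw [Nat.card_eq_fintype_card, Nat.card_eq_fintype_card, Nat.card_eq_fintype_card,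
    ← edgeFinset_card, ← card_univ]
  have hsplit : #{v | v = root v} + #{v | v ≠ root v} = #(univ : Finset V) :=
    card_filter_add_card_filter_not _
  omega

lemma card_connectedComponent_le_of_forall_exists_reachable [Finite V] {S : Finset (Sym2 V)}
    (hS : ∀ v, ∃ a b, G.Adj a b ∧ G.Reachable v a ∧ s(a, b) ∈ S) :
    Nat.card G.ConnectedComponent ≤ #S := by
  have := Fintype.ofFinite G.ConnectedComponent
  choose a b hadj hreach hmem using hS
  have hcomp : ∀ v, G.connectedComponentMk (a v) = G.connectedComponentMk v := fun v =>
    (ConnectedComponent.sound (hreach v)).symm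
  rw [Nat.card_eq_fintype_card, ← card_univ]
  refine card_le_card_of_injOn (fun C => s(a C.out, b C.out)) (fun C _ => hmem _) ?_
  intro C _ D _ hCD
  have h : G.connectedComponentMk (a C.out) = G.connectedComponentMk (a D.out) := by
    rcases Sym2.eq_iff.1 hCD with ⟨h, -⟩ | ⟨h, -⟩
    · rw [h]
    · rw [h]
      exact ConnectedComponent.sound (hadj D.out).symm.reachable
  rw [hcomp, hcomp] at h
  exact C.out_eq.symm.trans (h.trans D.out_eq)

variable {ι : Type*} [DecidableEq ι]

def colorClass [Fintype G.edgeSet] (χ : Sym2 V → ι) (i : ι) : Finset (Sym2 V) :=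
  G.edgeFinset.filter (χ · = i)

lemma mem_colorClass [Fintype G.edgeSet] {χ : Sym2 V → ι} {i : ι} {e : Sym2 V} :
    e ∈ G.colorClass χ i ↔ e ∈ G.edgeSet ∧ χ e = i := by
  simp [colorClass]

lemma notMem_of_mem_colorClass [Fintype G.edgeSet] {χ : Sym2 V → ι}
    (hproper : ∀ e ∈ G.edgeSet, ∀ f ∈ G.edgeSet, e ≠ f → (∃ v : V, v ∈ e ∧ v ∈ f) → χ e ≠ χ f)
    {i : ι} {e f : Sym2 V} (he : e ∈ G.colorClass χ i) (hf : f ∈ G.colorClass χ i) (hef : e ≠ f)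
    {v : V} (hv : v ∈ e) : v ∉ f := by
  rw [mem_colorClass] at he hf
  exact fun hvf => hproper e he.1 f hf.1 hef ⟨v, hv, hvf⟩ (he.2.trans hf.2.symm)

lemma exists_le_card_colorClass [Fintype ι] [Finite V] [Fintype G.edgeSet] (r : ι → ℕ)
    (χ : Sym2 V → ι) (c : ι)
    (hc : ∀ v : V, ∃ a b : V, G.Adj a b ∧ G.Reachable v a ∧ χ s(a, b) = c)
    (hcard : r c + ∑ i, (r i - 1) ≤ Nat.card V) :
    ∃ i, r i ≤ #(G.colorClass χ i) := by
  by_contra! hsmall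
  have hV := G.card_le_card_edgeSet_add_card_connectedComponent
  have hE : Nat.card G.edgeSet = ∑ i, #(G.colorClass χ i) := by
    rw [Nat.card_eq_fintype_card, ← edgeFinset_card]
    exact card_eq_sum_card_fiberwise fun e _ => mem_univ (χ e)
  have hC : Nat.card G.ConnectedComponent ≤ #(G.colorClass χ c) :=
    card_connectedComponent_le_of_forall_exists_reachable fun v => by
      obtain ⟨a, b, hab, hva, hχ⟩ := hc v
      exact ⟨a, b, hab, hva, mem_colorClass.2 ⟨hab, hχ⟩⟩
  have hsum : ∑ i, #(G.colorClass χ i) ≤ ∑ i, (r i - 1) :=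
    sum_le_sum fun i _ => Nat.le_sub_one_of_lt (hsmall i)
  have := hsmall c
  omega

end SimpleGraph

theorem good_forest_matching_general {V : Type*} [Fintype V]
    (t : ℕ) (r : Fin t → ℕ)
    (F : SimpleGraph V)
    (χ : Sym2 V → Fin t)
    (hproper : ∀ e ∈ F.edgeSet, ∀ f ∈ F.edgeSet, e ≠ f →
      (∃ v : V, v ∈ e ∧ v ∈ f) → χ e ≠ χ f)
    (c : Fin t)
    (hc : ∀ v : V, ∃ a b : V, F.Adj a b ∧ F.Reachable v a ∧ χ s(a, b) = c)
    (hcard : Finset.univ.sup r + ∑ i, (r i - 1) ≤ Fintype.card V) :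
    ∃ i : Fin t, ∃ M : Finset (Sym2 V), M.card = r i ∧
      (∀ e ∈ M, e ∈ F.edgeSet ∧ χ e = i) ∧
      (∀ e ∈ M, ∀ f ∈ M, e ≠ f → ∀ v : V, v ∈ e → v ∉ f) := by
  classical
  have hcard' : r c + ∑ i, (r i - 1) ≤ Nat.card V := by
    rw [Nat.card_eq_fintype_card]
    exact le_trans (by gcongr; exact le_sup (mem_univ c)) hcard
  obtain ⟨i, hi⟩ := F.exists_le_card_colorClass r χ c hc hcard'
  obtain ⟨M, hMsub, hMcard⟩ := exists_subset_card_eq hi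
  exact ⟨i, M, hMcard, fun e he => SimpleGraph.mem_colorClass.1 (hMsub he),
    fun e he f hf hef v hv => F.notMem_of_mem_colorClass hproper (hMsub he) (hMsub hf) hef hv⟩

/-- Good forest lemma: let `F` be a forest (acyclic, no isolated vertices, so its
vertex set is all of `V`) with a proper edge-coloring `χ` such that some color `c`
appears in every connected component. If `|V(F)| ≥ max_i r_i + ∑_i (r_i − 1)`, then
for some `i`, `F` contains a matching of size `r_i` in color `i`. -/
theorem good_forest_matching {V : Type*} [Fintype V] [DecidableEq V]
    (t : ℕ) (ht : 2 ≤ t) (r : Fin t → ℕ) (hr : ∀ i, 1 ≤ r i)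
    (F : SimpleGraph V) (hacyclic : F.IsAcyclic)
    (hnoiso : ∀ v : V, ∃ u : V, F.Adj v u)
    (χ : Sym2 V → Fin t)
    (hproper : ∀ e ∈ F.edgeSet, ∀ f ∈ F.edgeSet, e ≠ f →
      (∃ v : V, v ∈ e ∧ v ∈ f) → χ e ≠ χ f)
    (c : Fin t)
    (hc : ∀ v : V, ∃ a b : V, F.Adj a b ∧ F.Reachable v a ∧ χ s(a, b) = c)
    (hcard : Finset.univ.sup r + ∑ i, (r i - 1) ≤ Fintype.card V) :
    ∃ i : Fin t, ∃ M : Finset (Sym2 V), M.card = r i ∧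
      (∀ e ∈ M, e ∈ F.edgeSet ∧ χ e = i) ∧
      (∀ e ∈ M, ∀ f ∈ M, e ≠ f → ∀ v : V, v ∈ e → v ∉ f) :=
  good_forest_matching_general t r F χ hproper c hc hcard
end

section
/- Let t ≥ 1 and let χ be a t-coloring of E(K_n). Let T be a subtree of K_n with m ≥ 1 edges such that χ restricted to the edges of T is a proper edge-coloring (any two edges of T sharing a vertex receive different colors), and let x, y be two distinct vertices of K_n, neither belonging to V(T), such that the color χ(xy) does not appear on any edge of T. Then there exists a subtree T* of K_n such that: (1) V(T*) ⊆ V(T) ∪ {x, y}; (2) T* has either m+1 or m+2 edges; (3) every color that χ assigns to some edge of T, as well as the color χ(xy), is assigned by χ to some edge of T*; and (4) χ restricted to the edges of T* is a proper edge-coloring of T*. -/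
/-!
Write `c = χ(xy)`. If for some vertex `v` of `T` the color `χ(vx)` (or symmetrically `χ(vy)`)
is missing at `v` in `T`, attach the pendant edge `vx` to `T`, followed by `xy` unless
`χ(vx) = c`. Otherwise every `v ∈ T` has neighbours `f v` and `g v` in `T` with
`χ(v, f v) = χ(vx)` and `χ(v, g v) = χ(vy)`. The walk `v, f v, g (f v), …` in the finite
forest `T` must backtrack, which yields an edge `uw` of `T` with `χ(uy) = χ(uw) = χ(wx)`;
replacing `uw` by the path `u y x w` keeps every color of `T`, adds `c`, and leaves the coloring
proper.
-/

namespace Function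

variable {α : Type*}

-- `v, f v, g (f v), f (g (f v)), …`
def altIterate (f g : α → α) (v : α) : ℕ → α
  | 0 => v
  | k + 1 => altIterate g f (f v) k

lemma exists_apply_apply_eq_of_altIterate {f g : α → α} {v : α} {k : ℕ}
    (h : altIterate f g v (k + 2) = altIterate f g v k) : ∃ u, f (g u) = u ∨ g (f u) = u := by
  induction k generalizing f g v with
  | zero => exact ⟨v, Or.inr h⟩
  | succ k ih => exact (ih h).imp fun _ => Or.symm

end Function

namespace SimpleGraph

variable {V : Type*} {G : SimpleGraph V}

def Walk.ofSeq (a : ℕ → V) (h : ∀ k, G.Adj (a k) (a (k + 1))) :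
    (k : ℕ) → G.Walk (a 0) (a k)
  | 0 => .nil
  | k + 1 => (Walk.ofSeq a h k).concat (h k)

lemma Walk.edges_ofSeq (a : ℕ → V) (h : ∀ k, G.Adj (a k) (a (k + 1))) (k : ℕ) :
    (Walk.ofSeq a h k).edges = (List.range k).map fun i => s(a i, a (i + 1)) := by
  induction k with
  | zero => rfl
  | succ k ih => simp [Walk.ofSeq, Walk.edges_concat, ih, List.range_succ]

lemma Walk.length_ofSeq (a : ℕ → V) (h : ∀ k, G.Adj (a k) (a (k + 1))) (k : ℕ) :
    (Walk.ofSeq a h k).length = k := by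
  induction k with
  | zero => rfl
  | succ k ih => simp [Walk.ofSeq, ih]

theorem IsAcyclic.exists_apply_add_two_eq [Finite V] (hG : G.IsAcyclic) (a : ℕ → V)
    (h : ∀ k, G.Adj (a k) (a (k + 1))) : ∃ k, a (k + 2) = a k := by
  have := Fintype.ofFinite V
  by_contra! hback
  have hpath : (Walk.ofSeq a h (Fintype.card V)).IsPath := by
    rw [hG.isPath_iff_isChain, Walk.edges_ofSeq, List.isChain_map, List.isChain_range]
    intro i _ heq
    rcases Sym2.eq_iff.mp heq with ⟨hi, -⟩ | ⟨hi, -⟩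
    · exact (h i).ne hi
    · exact hback i hi.symm
  simpa [Walk.length_ofSeq] using hpath.length_lt

open Function in
lemma adj_altIterate {f g : V → V} (hf : ∀ v, G.Adj v (f v)) (hg : ∀ v, G.Adj v (g v))
    (v : V) (k : ℕ) : G.Adj (altIterate f g v k) (altIterate f g v (k + 1)) := by
  induction k generalizing f g v with
  | zero => exact hf v
  | succ k ih => exact ih hg hf (f v)

theorem IsAcyclic.exists_apply_apply_eq [Finite V] [Nonempty V] (hG : G.IsAcyclic)
    {f g : V → V} (hf : ∀ v, G.Adj v (f v)) (hg : ∀ v, G.Adj v (g v)) :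
    ∃ u, f (g u) = u ∨ g (f u) = u :=
  have ⟨_, hk⟩ := hG.exists_apply_add_two_eq _ (adj_altIterate hf hg (Classical.arbitrary V))
  Function.exists_apply_apply_eq_of_altIterate hk

namespace Subgraph

variable {H : G.Subgraph}

lemma ncard_edgeSet_coe (H : G.Subgraph) : H.coe.edgeSet.ncard = H.edgeSet.ncard := by
  rw [← image_coe_edgeSet_coe, Set.ncard_image_of_injective _
    (Sym2.map.injective Subtype.val_injective)]

lemma coe_isTree_iff [Finite V] :
    H.coe.IsTree ↔ H.Connected ∧ H.edgeSet.ncard + 1 = H.verts.ncard := by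
  rw [isTree_iff_connected_and_card, Nat.card_coe_set_eq, Nat.card_coe_set_eq,
    ncard_edgeSet_coe, Subgraph.connected_iff']

lemma eq_of_mem_of_mem_edgeSet {f : Sym2 V} (hf : f ∈ H.edgeSet) {v x z : V}
    (hx : x ∉ H.verts) (hz : z ∈ s(v, x)) (hzf : z ∈ f) : z = v := by
  rcases Sym2.mem_iff.mp hz with rfl | rfl
  · rfl
  · exact absurd (H.mem_verts_of_mem_edge hf hzf) hx

lemma edgeSet_sup_subgraphOfAdj {v x : V} (hvx : G.Adj v x) :
    (H ⊔ G.subgraphOfAdj hvx).edgeSet = insert s(v, x) H.edgeSet := by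
  rw [edgeSet_sup, edgeSet_subgraphOfAdj, Set.union_singleton]

lemma verts_sup_subgraphOfAdj {v x : V} (hvx : G.Adj v x) (hv : v ∈ H.verts) :
    (H ⊔ G.subgraphOfAdj hvx).verts = insert x H.verts := by
  rw [verts_sup, subgraphOfAdj_verts, Set.union_insert, Set.union_singleton,
    Set.insert_comm, Set.insert_eq_of_mem hv]

lemma Connected.sup_subgraphOfAdj {v x : V} (hH : H.Connected) (hvx : G.Adj v x)
    (hv : v ∈ H.verts) : (H ⊔ G.subgraphOfAdj hvx).Connected :=
  connected_sup hH.preconnected (subgraphOfAdj_connected hvx).preconnected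
    ⟨v, hv, by simp⟩

lemma ncard_edgeSet_sup_subgraphOfAdj [Finite V] {v x : V} (hvx : G.Adj v x)
    (hx : x ∉ H.verts) :
    (H ⊔ G.subgraphOfAdj hvx).edgeSet.ncard = H.edgeSet.ncard + 1 := by
  rw [edgeSet_sup_subgraphOfAdj, Set.ncard_insert_of_notMem
    fun h => hx (H.mem_verts_of_mem_edge h (Sym2.mem_mk_right v x))]

lemma coe_isTree_sup_subgraphOfAdj [Finite V] {v x : V} (hH : H.coe.IsTree) (hvx : G.Adj v x)
    (hv : v ∈ H.verts) (hx : x ∉ H.verts) : (H ⊔ G.subgraphOfAdj hvx).coe.IsTree := by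
  rw [coe_isTree_iff] at hH ⊢
  refine ⟨hH.1.sup_subgraphOfAdj hvx hv, ?_⟩
  rw [ncard_edgeSet_sup_subgraphOfAdj hvx hx, verts_sup_subgraphOfAdj hvx hv,
    Set.ncard_insert_of_notMem hx, hH.2]

lemma Connected.deleteEdges_of_reachable (hH : H.Connected) {u w : V} (hu : u ∈ H.verts)
    (hw : w ∈ H.verts) (hr : (H.deleteEdges {s(u, w)}).coe.Reachable ⟨u, hu⟩ ⟨w, hw⟩) :
    (H.deleteEdges {s(u, w)}).Connected := by
  have hpre :
      Sym2.map (↑) ⁻¹' {s(u, w)} = ({s(⟨u, hu⟩, ⟨w, hw⟩)} : Set (Sym2 H.verts)) := by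
    ext e
    induction e using Sym2.ind
    simp [Subtype.ext_iff]
  rw [Subgraph.connected_iff', coe_deleteEdges_eq, hpre]
  rw [coe_deleteEdges_eq, hpre] at hr
  exact hH.coe.connected_delete_edge_of_not_isBridge (not_not.mpr hr)

lemma edgeSet_deleteEdges (H : G.Subgraph) (s : Set (Sym2 V)) :
    (H.deleteEdges s).edgeSet = H.edgeSet \ s := by
  ext e
  induction e using Sym2.ind
  simp

lemma ncard_edgeSet_deleteEdges_sup_subgraphOfAdj [Finite V] {a b u w : V} (hab : G.Adj a b)
    (hnew : s(a, b) ∉ H.edgeSet) (huw : H.Adj u w) :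
    ((H ⊔ G.subgraphOfAdj hab).deleteEdges {s(u, w)}).edgeSet.ncard = H.edgeSet.ncard := by
  rw [edgeSet_deleteEdges, edgeSet_sup_subgraphOfAdj,
    Set.ncard_sdiff_singleton_of_mem (Set.mem_insert_of_mem _ (H.mem_edgeSet.2 huw)),
    Set.ncard_insert_of_notMem hnew, Nat.add_sub_cancel]

lemma coe_isTree_deleteEdges_sup_subgraphOfAdj [Finite V] (hH : H.coe.IsTree) {a b u w : V}
    (hab : G.Adj a b) (ha : a ∈ H.verts) (hb : b ∈ H.verts) (hnew : s(a, b) ∉ H.edgeSet)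
    (huw : H.Adj u w) (hr : ((H ⊔ G.subgraphOfAdj hab).deleteEdges {s(u, w)}).coe.Reachable
      ⟨u, Or.inl (H.edge_vert huw)⟩ ⟨w, Or.inl (H.edge_vert huw.symm)⟩) :
    ((H ⊔ G.subgraphOfAdj hab).deleteEdges {s(u, w)}).coe.IsTree := by
  have hverts : (H ⊔ G.subgraphOfAdj hab).verts = H.verts := by
    rw [verts_sup, subgraphOfAdj_verts, Set.union_eq_left]
    exact Set.insert_subset ha (Set.singleton_subset_iff.2 hb)
  rw [coe_isTree_iff] at hH ⊢
  refine ⟨(hH.1.sup_subgraphOfAdj hab ha).deleteEdges_of_reachable _ _ hr, ?_⟩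
  rw [ncard_edgeSet_deleteEdges_sup_subgraphOfAdj hab hnew huw, deleteEdges_verts, hverts, hH.2]

section Reroute

variable {u w x y : V} (huy : G.Adj u y) (hyx : G.Adj y x) (hxw : G.Adj x w)

def reroute (H : G.Subgraph) : G.Subgraph :=
  (H ⊔ G.subgraphOfAdj huy ⊔ G.subgraphOfAdj hyx ⊔ G.subgraphOfAdj hxw).deleteEdges {s(u, w)}

lemma edgeSet_reroute :
    (H.reroute huy hyx hxw).edgeSet =
      insert s(x, w) (insert s(y, x) (insert s(u, y) H.edgeSet)) \ {s(u, w)} := by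
  rw [reroute, edgeSet_deleteEdges, edgeSet_sup_subgraphOfAdj, edgeSet_sup_subgraphOfAdj,
    edgeSet_sup_subgraphOfAdj]

lemma verts_reroute (hu : u ∈ H.verts) (hw : w ∈ H.verts) :
    (H.reroute huy hyx hxw).verts = insert x (insert y H.verts) := by
  rw [reroute, deleteEdges_verts, verts_sup_subgraphOfAdj hxw (by simp), verts_sup_subgraphOfAdj _
    (Or.inr (by simp)), verts_sup_subgraphOfAdj _ hu, Set.insert_eq_of_mem (by simp [hw])]

lemma coe_isTree_reroute [Finite V] (hH : H.coe.IsTree) (huw : H.Adj u w) (hx : x ∉ H.verts)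
    (hy : y ∉ H.verts) : (H.reroute huy hyx hxw).coe.IsTree := by
  have hu := H.edge_vert huw
  have hw := H.edge_vert huw.symm
  have hxu : x ≠ u := ne_of_mem_of_not_mem hu hx |>.symm
  have hyu : y ≠ u := ne_of_mem_of_not_mem hu hy |>.symm
  have hyw : y ≠ w := ne_of_mem_of_not_mem hw hy |>.symm
  have hx₁ : x ∉ (H ⊔ G.subgraphOfAdj huy).verts := by
    simp [verts_sup_subgraphOfAdj huy hu, hx, hyx.ne.symm]
  have hnew : s(x, w) ∉ (H ⊔ G.subgraphOfAdj huy ⊔ G.subgraphOfAdj hyx).edgeSet := by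
    rw [edgeSet_sup_subgraphOfAdj, edgeSet_sup_subgraphOfAdj]
    rintro (h | h | h)
    · simp [hyx.ne.symm, hyw.symm] at h
    · simp [hxu, hyx.ne.symm] at h
    · exact hx (H.mem_verts_of_mem_edge h (Sym2.mem_mk_left x w))
  refine coe_isTree_deleteEdges_sup_subgraphOfAdj (coe_isTree_sup_subgraphOfAdj
    (coe_isTree_sup_subgraphOfAdj hH huy hu hy) hyx (Or.inr (by simp)) hx₁) hxw (by simp)
    (by simp [hw]) hnew (.inl (.inl huw)) ?_
  have h₁ : (H.reroute huy hyx hxw).Adj u y := by simp [reroute, hyw, hyu]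
  have h₂ : (H.reroute huy hyx hxw).Adj y x := by simp [reroute, hyw, hyu]
  have h₃ : (H.reroute huy hyx hxw).Adj x w := by simp [reroute, hxu, huw.ne.symm]
  exact h₁.coe.reachable.trans (h₂.coe.reachable.trans h₃.coe.reachable)

lemma ncard_edgeSet_reroute [Finite V] (hH : H.coe.IsTree) (huw : H.Adj u w) (hx : x ∉ H.verts)
    (hy : y ∉ H.verts) : (H.reroute huy hyx hxw).edgeSet.ncard = H.edgeSet.ncard + 2 := by
  have h := coe_isTree_iff.mp (coe_isTree_reroute huy hyx hxw hH huw hx hy)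
  rw [verts_reroute _ _ _ (H.edge_vert huw) (H.edge_vert huw.symm),
    Set.ncard_insert_of_notMem (by simp [hx, hyx.ne.symm]), Set.ncard_insert_of_notMem hy,
    ← (coe_isTree_iff.mp hH).2] at h
  omega

end Reroute

end Subgraph

end SimpleGraph

open SimpleGraph Subgraph

variable {V β : Type*}

def IsProperColoringOn (χ : Sym2 V → β) (A : Set (Sym2 V)) : Prop :=
  A.Pairwise fun e f => (∃ v, v ∈ e ∧ v ∈ f) → χ e ≠ χ f

section IsProperColoringOn

variable {χ : Sym2 V → β} {A : Set (Sym2 V)}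

lemma IsProperColoringOn.mono {B : Set (Sym2 V)} (hA : IsProperColoringOn χ A) (hBA : B ⊆ A) :
    IsProperColoringOn χ B :=
  Set.Pairwise.mono hBA hA

lemma IsProperColoringOn.insert {e : Sym2 V} (hA : IsProperColoringOn χ A)
    (he : ∀ f ∈ A, e ≠ f → (∃ v, v ∈ e ∧ v ∈ f) → χ e ≠ χ f) :
    IsProperColoringOn χ (insert e A) :=
  Set.Pairwise.insert hA fun f hf hne =>
    ⟨he f hf hne, fun ⟨v, hvf, hve⟩ => (he f hf hne ⟨v, hve, hvf⟩).symm⟩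

lemma isProperColoringOn_reroute {G : SimpleGraph V} {H : G.Subgraph} {x y u w : V}
    (huy : G.Adj u y) (hyx : G.Adj y x) (hxw : G.Adj x w)
    (hproper : IsProperColoringOn χ H.edgeSet) (hcol : ∀ e ∈ H.edgeSet, χ e ≠ χ s(x, y))
    (hx : x ∉ H.verts) (hy : y ∉ H.verts) (huw : H.Adj u w)
    (hu : χ s(u, y) = χ s(u, w)) (hw : χ s(w, x) = χ s(w, u)) :
    IsProperColoringOn χ (H.reroute huy hyx hxw).edgeSet := by
  have hold : s(u, w) ∈ H.edgeSet := huw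
  have hyx' : s(y, x) = s(x, y) := Sym2.eq_swap
  have hxw' : s(x, w) = s(w, x) := Sym2.eq_swap
  have hwu : s(w, u) = s(u, w) := Sym2.eq_swap
  refine IsProperColoringOn.mono
    (A := insert s(x, w) (insert s(y, x) (insert s(u, y) (H.edgeSet \ {s(u, w)})))) ?_
    (edgeSet_reroute huy hyx hxw ▸ fun e => by simp +contextual)
  refine (((hproper.mono Set.sdiff_subset).insert ?_).insert ?_).insert ?_
  · rintro f ⟨hf, hfuw⟩ - ⟨z, hz, hzf⟩
    obtain rfl := eq_of_mem_of_mem_edgeSet hf hy hz hzf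
    rw [hu]
    exact hproper hold hf (Ne.symm hfuw) ⟨z, Sym2.mem_mk_left _ _, hzf⟩
  · rintro f (rfl | ⟨hf, -⟩) - -
    · rw [hyx', hu]
      exact (hcol _ hold).symm
    · rw [hyx']
      exact (hcol f hf).symm
  · rintro f (rfl | rfl | ⟨hf, hfuw⟩) - ⟨z, hz, hzf⟩
    · rw [hyx', hxw', hw, hwu]
      exact hcol _ hold
    · have hxu : x ≠ u := ne_of_mem_of_not_mem (H.edge_vert huw) hx |>.symm
      have hwy : w ≠ y := ne_of_mem_of_not_mem (H.edge_vert huw.symm) hy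
      rcases Sym2.mem_iff.mp hz with rfl | rfl <;>
        rcases Sym2.mem_iff.mp hzf with h | h
      exacts [absurd h hxu, absurd h hyx.ne.symm, absurd h huw.ne.symm, absurd h hwy]
    · rw [hxw'] at hz ⊢
      obtain rfl := eq_of_mem_of_mem_edgeSet hf hx hz hzf
      rw [hw, hwu]
      exact hproper hold hf (Ne.symm hfuw) ⟨z, Sym2.mem_mk_right _ _, hzf⟩

end IsProperColoringOn

structure IsTreeExtension (χ : Sym2 V → β) (T : (⊤ : SimpleGraph V).Subgraph) (x y : V)
    (T' : (⊤ : SimpleGraph V).Subgraph) : Prop where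
  isTree : T'.coe.IsTree
  verts_subset : T'.verts ⊆ T.verts ∪ {x, y}
  ncard_edgeSet :
    T'.edgeSet.ncard = T.edgeSet.ncard + 1 ∨ T'.edgeSet.ncard = T.edgeSet.ncard + 2
  image_subset : χ '' T.edgeSet ⊆ χ '' T'.edgeSet
  mem_image : χ s(x, y) ∈ χ '' T'.edgeSet
  isProperColoringOn : IsProperColoringOn χ T'.edgeSet

variable {χ : Sym2 V → β} {T : (⊤ : SimpleGraph V).Subgraph} {x y : V}

lemma IsTreeExtension.symm {T' : (⊤ : SimpleGraph V).Subgraph}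
    (h : IsTreeExtension χ T x y T') : IsTreeExtension χ T y x T' where
  __ := h
  verts_subset := Set.pair_comm x y ▸ h.verts_subset
  mem_image := Sym2.eq_swap (a := x) ▸ h.mem_image

variable [Finite V]

lemma exists_isTreeExtension_of_color_eq (hT : T.coe.IsTree)
    (hproper : IsProperColoringOn χ T.edgeSet) (hcol : ∀ e ∈ T.edgeSet, χ e ≠ χ s(x, y))
    (hx : x ∉ T.verts) {v : V} (hv : v ∈ T.verts)
    (hvx : χ s(v, x) = χ s(x, y)) : ∃ T', IsTreeExtension χ T x y T' := by
  have hadj : (⊤ : SimpleGraph V).Adj v x := ne_of_mem_of_not_mem hv hx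
  have hE := edgeSet_sup_subgraphOfAdj (H := T) hadj
  refine ⟨T ⊔ (⊤ : SimpleGraph V).subgraphOfAdj hadj,
    coe_isTree_sup_subgraphOfAdj hT hadj hv hx, ?_,
    Or.inl (ncard_edgeSet_sup_subgraphOfAdj hadj hx),
    Set.image_mono (hE ▸ Set.subset_insert _ _),
    ⟨s(v, x), hE ▸ Set.mem_insert _ _, hvx⟩, ?_⟩
  · rw [verts_sup_subgraphOfAdj hadj hv]
    exact Set.insert_subset (by simp) Set.subset_union_left
  · rw [hE]
    exact hproper.insert fun f hf _ _ => hvx ▸ (hcol f hf).symm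

lemma exists_isTreeExtension_of_color_missing_of_ne (hT : T.coe.IsTree)
    (hproper : IsProperColoringOn χ T.edgeSet) (hcol : ∀ e ∈ T.edgeSet, χ e ≠ χ s(x, y))
    (hxy : x ≠ y) (hx : x ∉ T.verts) (hy : y ∉ T.verts)
    {v : V} (hv : v ∈ T.verts) (hvx : χ s(v, x) ≠ χ s(x, y))
    (hfree : ∀ w, T.Adj v w → χ s(v, w) ≠ χ s(v, x)) :
    ∃ T', IsTreeExtension χ T x y T' := by
  have hadj₁ : (⊤ : SimpleGraph V).Adj v x := ne_of_mem_of_not_mem hv hx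
  have hadj₂ : (⊤ : SimpleGraph V).Adj x y := hxy
  set T₁ := T ⊔ (⊤ : SimpleGraph V).subgraphOfAdj hadj₁
  have hT₁ : T₁.coe.IsTree := coe_isTree_sup_subgraphOfAdj hT hadj₁ hv hx
  have hV₁ : T₁.verts = insert x T.verts := verts_sup_subgraphOfAdj hadj₁ hv
  have hx₁ : x ∈ T₁.verts := hV₁ ▸ Set.mem_insert _ _
  have hy₁ : y ∉ T₁.verts := by simp [hV₁, hy, hxy.symm]
  have hE : (T₁ ⊔ (⊤ : SimpleGraph V).subgraphOfAdj hadj₂).edgeSet =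
      insert s(x, y) (insert s(v, x) T.edgeSet) := by
    rw [edgeSet_sup_subgraphOfAdj, edgeSet_sup_subgraphOfAdj]
  refine ⟨T₁ ⊔ (⊤ : SimpleGraph V).subgraphOfAdj hadj₂,
    coe_isTree_sup_subgraphOfAdj hT₁ hadj₂ hx₁ hy₁, ?_,
    Or.inr ?_, Set.image_mono (hE ▸ (Set.subset_insert _ _).trans (Set.subset_insert _ _)),
    ⟨s(x, y), hE ▸ Set.mem_insert _ _, rfl⟩, ?_⟩
  · rw [verts_sup_subgraphOfAdj hadj₂ hx₁, hV₁]
    intro a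
    simp +contextual [or_left_comm]
  · rw [ncard_edgeSet_sup_subgraphOfAdj hadj₂ hy₁, ncard_edgeSet_sup_subgraphOfAdj hadj₁ hx]
  · rw [hE]
    refine (hproper.insert ?_).insert ?_
    · rintro f hf - ⟨z, hz, hzf⟩
      obtain rfl := eq_of_mem_of_mem_edgeSet hf hx hz hzf
      obtain ⟨w, rfl⟩ := Sym2.mem_iff_exists.mp hzf
      exact (hfree w hf).symm
    · rintro f (rfl | hf) - -
      · exact hvx.symm
      · exact (hcol f hf).symm

lemma exists_isTreeExtension_of_adj (hT : T.coe.IsTree)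
    (hproper : IsProperColoringOn χ T.edgeSet) (hcol : ∀ e ∈ T.edgeSet, χ e ≠ χ s(x, y))
    (hxy : x ≠ y) (hx : x ∉ T.verts) (hy : y ∉ T.verts)
    {u w : V} (huw : T.Adj u w) (hu : χ s(u, y) = χ s(u, w)) (hw : χ s(w, x) = χ s(w, u)) :
    ∃ T', IsTreeExtension χ T x y T' := by
  have hu' : u ∈ T.verts := T.edge_vert huw
  have hw' : w ∈ T.verts := T.edge_vert huw.symm
  have hxu : x ≠ u := ne_of_mem_of_not_mem hu' hx |>.symm
  have hyu : y ≠ u := ne_of_mem_of_not_mem hu' hy |>.symm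
  have hyw : y ≠ w := ne_of_mem_of_not_mem hw' hy |>.symm
  have huy : (⊤ : SimpleGraph V).Adj u y := hyu.symm
  have hyx : (⊤ : SimpleGraph V).Adj y x := hxy.symm
  have hxw : (⊤ : SimpleGraph V).Adj x w := (ne_of_mem_of_not_mem hw' hx).symm
  have hE := edgeSet_reroute (H := T) huy hyx hxw
  refine ⟨T.reroute huy hyx hxw, coe_isTree_reroute huy hyx hxw hT huw hx hy, ?_,
    Or.inr (ncard_edgeSet_reroute huy hyx hxw hT huw hx hy), ?_,
    ⟨s(y, x), by simp [hE, hyu, hxu], congrArg χ Sym2.eq_swap⟩, ?_⟩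
  · rw [verts_reroute huy hyx hxw hu' hw']
    intro a
    simp +contextual
  · rintro _ ⟨e, he, rfl⟩
    by_cases he' : e = s(u, w)
    · exact ⟨s(u, y), by simp [hE, hyu, hyw], he' ▸ hu⟩
    · exact ⟨e, by simp [hE, he, he'], rfl⟩
  · exact isProperColoringOn_reroute huy hyx hxw hproper hcol hx hy huw hu hw

lemma exists_isTreeExtension_of_color_missing (hT : T.coe.IsTree)
    (hproper : IsProperColoringOn χ T.edgeSet) (hcol : ∀ e ∈ T.edgeSet, χ e ≠ χ s(x, y))
    (hxy : x ≠ y) (hx : x ∉ T.verts) (hy : y ∉ T.verts)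
    {v : V} (hv : v ∈ T.verts) (hfree : ∀ w, T.Adj v w → χ s(v, w) ≠ χ s(v, x)) :
    ∃ T', IsTreeExtension χ T x y T' := by
  by_cases hvx : χ s(v, x) = χ s(x, y)
  · exact exists_isTreeExtension_of_color_eq hT hproper hcol hx hv hvx
  · exact exists_isTreeExtension_of_color_missing_of_ne hT hproper hcol hxy hx hy hv hvx hfree

theorem exists_isTreeExtension (hT : T.coe.IsTree) (hproper : IsProperColoringOn χ T.edgeSet)
    (hcol : ∀ e ∈ T.edgeSet, χ e ≠ χ s(x, y)) (hxy : x ≠ y) (hx : x ∉ T.verts)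
    (hy : y ∉ T.verts) : ∃ T', IsTreeExtension χ T x y T' := by
  have hcol' : ∀ e ∈ T.edgeSet, χ e ≠ χ s(y, x) := Sym2.eq_swap (a := x) ▸ hcol
  by_cases hfree :
      ∃ v ∈ T.verts, ∃ z ∈ ({x, y} : Set V), ∀ w, T.Adj v w → χ s(v, w) ≠ χ s(v, z)
  · obtain ⟨v, hv, z, rfl | rfl, hvz⟩ := hfree
    · exact exists_isTreeExtension_of_color_missing hT hproper hcol hxy hx hy hv hvz
    · obtain ⟨T', h⟩ :=
        exists_isTreeExtension_of_color_missing hT hproper hcol' hxy.symm hy hx hv hvz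
      exact ⟨T', h.symm⟩
  push Not at hfree
  have hnbr : ∀ z ∈ ({x, y} : Set V), ∃ g : T.verts → T.verts,
      ∀ v, T.coe.Adj v (g v) ∧ χ s(v, g v) = χ s(v, z) := by
    intro z hz
    choose g hg using fun v : T.verts => hfree v v.2 z hz
    exact ⟨fun v => ⟨g v, T.edge_vert (hg v).1.symm⟩, hg⟩
  obtain ⟨f, hf⟩ := hnbr x (by simp)
  obtain ⟨g, hg⟩ := hnbr y (by simp)
  have := hT.connected.nonempty
  obtain ⟨u, hu | hu⟩ :=
    IsAcyclic.exists_apply_apply_eq hT.isAcyclic (fun v => (hf v).1) (fun v => (hg v).1)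
  · exact exists_isTreeExtension_of_adj hT hproper hcol hxy hx hy (hg u).1 (hg u).2.symm
      (hu ▸ (hf (g u)).2).symm
  · obtain ⟨T', h⟩ := exists_isTreeExtension_of_adj hT hproper hcol' hxy.symm hy hx (hf u).1
      (hf u).2.symm (hu ▸ (hg (f u)).2).symm
    exact ⟨T', h.symm⟩

theorem treeExtend_general (t n m : ℕ)
    (χ : Sym2 (Fin n) → Fin t)
    (T : (⊤ : SimpleGraph (Fin n)).Subgraph)
    (hconn : T.Connected) (hacyclic : T.coe.IsAcyclic)
    (hTm : T.edgeSet.ncard = m)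
    (hproper : ∀ e ∈ T.edgeSet, ∀ f ∈ T.edgeSet, e ≠ f →
      (∃ v : Fin n, v ∈ e ∧ v ∈ f) → χ e ≠ χ f)
    (x y : Fin n) (hxy : x ≠ y) (hx : x ∉ T.verts) (hy : y ∉ T.verts)
    (hcol : ∀ e ∈ T.edgeSet, χ e ≠ χ s(x, y)) :
    ∃ T' : (⊤ : SimpleGraph (Fin n)).Subgraph,
      T'.Connected ∧ T'.coe.IsAcyclic ∧
      T'.verts ⊆ T.verts ∪ {x, y} ∧
      (T'.edgeSet.ncard = m + 1 ∨ T'.edgeSet.ncard = m + 2) ∧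
      (∀ e ∈ T.edgeSet, ∃ f ∈ T'.edgeSet, χ f = χ e) ∧
      (∃ f ∈ T'.edgeSet, χ f = χ s(x, y)) ∧
      (∀ e ∈ T'.edgeSet, ∀ f ∈ T'.edgeSet, e ≠ f →
        (∃ v : Fin n, v ∈ e ∧ v ∈ f) → χ e ≠ χ f) := by
  obtain ⟨T', h⟩ := exists_isTreeExtension ⟨hconn.coe, hacyclic⟩
    (fun e he f hf => hproper e he f hf) hcol hxy hx hy
  exact ⟨T', ⟨h.isTree.connected⟩, h.isTree.isAcyclic, h.verts_subset,
    hTm ▸ h.ncard_edgeSet,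
    fun e he => h.image_subset ⟨e, he, rfl⟩, h.mem_image,
    fun e he f hf => h.isProperColoringOn he hf⟩

/-- TreeExtend (existence content): given a properly edge-colored subtree `T` of `K_n`
with `m ≥ 1` edges and an edge `xy` disjoint from `T` whose color does not appear on
`T`, there is a properly edge-colored subtree `T*` with `V(T*) ⊆ V(T) ∪ {x, y}`,
having `m+1` or `m+2` edges, on which all colors of `T` together with `χ(xy)` appear. -/
theorem treeExtend (t n m : ℕ) (ht : 1 ≤ t) (hm : 1 ≤ m)
    (χ : Sym2 (Fin n) → Fin t)
    (T : (⊤ : SimpleGraph (Fin n)).Subgraph)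
    (hconn : T.Connected) (hacyclic : T.coe.IsAcyclic)
    (hTm : T.edgeSet.ncard = m)
    (hproper : ∀ e ∈ T.edgeSet, ∀ f ∈ T.edgeSet, e ≠ f →
      (∃ v : Fin n, v ∈ e ∧ v ∈ f) → χ e ≠ χ f)
    (x y : Fin n) (hxy : x ≠ y) (hx : x ∉ T.verts) (hy : y ∉ T.verts)
    (hcol : ∀ e ∈ T.edgeSet, χ e ≠ χ s(x, y)) :
    ∃ T' : (⊤ : SimpleGraph (Fin n)).Subgraph,
      T'.Connected ∧ T'.coe.IsAcyclic ∧
      T'.verts ⊆ T.verts ∪ {x, y} ∧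
      (T'.edgeSet.ncard = m + 1 ∨ T'.edgeSet.ncard = m + 2) ∧
      (∀ e ∈ T.edgeSet, ∃ f ∈ T'.edgeSet, χ f = χ e) ∧
      (∃ f ∈ T'.edgeSet, χ f = χ s(x, y)) ∧
      (∀ e ∈ T'.edgeSet, ∀ f ∈ T'.edgeSet, e ≠ f →
        (∃ v : Fin n, v ∈ e ∧ v ∈ f) → χ e ≠ χ f) :=
  treeExtend_general t n m χ T hconn hacyclic hTm hproper x y hxy hx hy hcol
end

section
/- For every integer n ≥ 3, suppose U_1, …, U_6 are subsets of the vertex set of K_n (some possibly empty) such that every pair of distinct vertices of K_n is contained together in some U_i, and U_1 ∩ U_2 = ∅. Then |U_i| ≥ k(n) for some i ∈ {1,…,6}. -/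
/-- `k(n) = n/2 + 1` if `n ≡ 2 (mod 4)`, and `k(n) = ⌈n/2⌉` otherwise. -/
def kfun (n : ℕ) : ℕ := if n % 4 = 2 then n / 2 + 1 else (n + 1) / 2

/-- Six-set covering lemma: if `U_1, …, U_6 ⊆ V(K_n)` are such that every pair of
distinct vertices lies together in some `U_i`, and `U_1 ∩ U_2 = ∅`, then some `U_i`
has at least `k(n)` vertices. -/
theorem six_cover (n : ℕ) (hn : 3 ≤ n) (U : Fin 6 → Finset (Fin n))
    (hcover : ∀ x y : Fin n, x ≠ y → ∃ i : Fin 6, x ∈ U i ∧ y ∈ U i)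
    (hdisj : Disjoint (U 0) (U 1)) :
    ∃ i : Fin 6, kfun n ≤ (U i).card := by
  classical
  by_contra hcon
  push_neg at hcon
  have hm2 : 2 * kfun n ≤ n + 2 := by unfold kfun; split <;> omega
  have hm1 : n ≤ 2 * kfun n := by unfold kfun; split <;> omega
  set T : Finset (Fin 6) := {2,3,4,5} with hT
  set S : Fin n → Finset (Fin 6) := fun v => T.filter (fun i => v ∈ U i) with hS
  have hSmem : ∀ (v : Fin n) (i : Fin 6), i ∈ S v ↔ i ∈ T ∧ v ∈ U i := by
    intro v i; rw [hS]; exact Finset.mem_filter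
  have hABdisj : ∀ z : Fin n, z ∈ U 0 → z ∈ U 1 → False := fun z h0 h1 =>
    Finset.disjoint_left.mp hdisj h0 h1
  have hT01 : ∀ i : Fin 6, i ≠ 0 → i ≠ 1 → i ∈ T := by rw [hT]; decide
  have hcross : ∀ x y : Fin n, x ∉ U 1 → y ∉ U 0 → x ≠ y →
      ∃ i, i ∈ S x ∧ i ∈ S y := by
    intro x y hx hy hxy
    obtain ⟨i, hix, hiy⟩ := hcover x y hxy
    have hi0 : i ≠ 0 := fun h => hy (h ▸ hiy)
    have hi1 : i ≠ 1 := fun h => hx (h ▸ hix)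
    have hiT := hT01 i hi0 hi1
    exact ⟨i, (hSmem x i).mpr ⟨hiT, hix⟩, (hSmem y i).mpr ⟨hiT, hiy⟩⟩
  have hca : (U 0).card < kfun n := hcon 0
  have hcb : (U 1).card < kfun n := hcon 1
  have hcompl0 : ((U 0)ᶜ : Finset (Fin n)).card = n - (U 0).card := by
    rw [Finset.card_compl, Fintype.card_fin]
  have hcompl1 : ((U 1)ᶜ : Finset (Fin n)).card = n - (U 1).card := by
    rw [Finset.card_compl, Fintype.card_fin]
  -- Step 1 : every S v is nonempty
  have hs1 : ∀ v : Fin n, (S v).Nonempty := by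
    intro v
    rcases Finset.eq_empty_or_nonempty (S v) with he | h
    · exfalso
      by_cases hvB : v ∈ U 1
      · -- then (U 1)ᶜ = ∅
        have hvA : v ∉ U 0 := fun h => hABdisj v h hvB
        have hemp : ((U 1)ᶜ : Finset (Fin n)) = ∅ := by
          apply Finset.eq_empty_of_forall_notMem
          intro x hx
          have hxB : x ∉ U 1 := Finset.mem_compl.mp hx
          have hxv : x ≠ v := fun h => hxB (h ▸ hvB)
          obtain ⟨j, _, hj2⟩ := hcross x v hxB hvA hxv
          rw [he] at hj2; exact absurd hj2 (Finset.notMem_empty j)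
        have hz : n - (U 1).card = 0 := by
          rw [← hcompl1, hemp, Finset.card_empty]
        omega
      · -- (U 0)ᶜ ⊆ {v}
        have hsub : ((U 0)ᶜ : Finset (Fin n)) ⊆ {v} := by
          intro y hy
          have hyA : y ∉ U 0 := Finset.mem_compl.mp hy
          by_contra hyv
          have hyv' : v ≠ y := fun h => hyv (by simp [h])
          obtain ⟨j, hj1, _⟩ := hcross v y hvB hyA hyv'
          rw [he] at hj1; exact absurd hj1 (Finset.notMem_empty j)
        have := Finset.card_le_card hsub
        rw [hcompl0, Finset.card_singleton] at this
        omega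
    · exact h
  -- Step 2 : every S v has at least 2 elements
  have hs2 : ∀ v : Fin n, 2 ≤ (S v).card := by
    intro v
    by_contra hlt
    have h1 : (S v).card = 1 := by
      have := Finset.card_pos.mpr (hs1 v); omega
    obtain ⟨i, hi⟩ := Finset.card_eq_one.mp h1
    have hvi : v ∈ U i := by
      have : i ∈ S v := by rw [hi]; exact Finset.mem_singleton_self i
      exact ((hSmem v i).mp this).2
    have hiT : i ∈ T := by
      have : i ∈ S v := by rw [hi]; exact Finset.mem_singleton_self i
      exact ((hSmem v i).mp this).1
    have honly : ∀ j, j ∈ S v → j = i := by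
      intro j hj; rw [hi] at hj; exact Finset.mem_singleton.mp hj
    have hUi := hcon i
    by_cases hvA : v ∈ U 0
    · have hvB : v ∉ U 1 := fun h => hABdisj v hvA h
      have hsub : ((U 0)ᶜ : Finset (Fin n)) ⊆ U i := by
        intro y hy
        have hyA : y ∉ U 0 := Finset.mem_compl.mp hy
        have hyv : v ≠ y := fun h => hyA (h ▸ hvA)
        obtain ⟨j, hj1, hj2⟩ := hcross v y hvB hyA hyv
        have := honly j hj1
        exact ((hSmem y i).mp (this ▸ hj2)).2
      have hvni : v ∉ ((U 0)ᶜ : Finset (Fin n)) := by simp [hvA]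
      have hins : insert v ((U 0)ᶜ : Finset (Fin n)) ⊆ U i :=
        Finset.insert_subset hvi hsub
      have := Finset.card_le_card hins
      rw [Finset.card_insert_of_notMem hvni, hcompl0] at this
      omega
    · by_cases hvB : v ∈ U 1
      · have hsub : ((U 1)ᶜ : Finset (Fin n)) ⊆ U i := by
          intro x hx
          have hxB : x ∉ U 1 := Finset.mem_compl.mp hx
          have hxv : x ≠ v := fun h => hxB (h ▸ hvB)
          obtain ⟨j, hj1, hj2⟩ := hcross x v hxB hvA hxv
          have := honly j hj2
          exact ((hSmem x i).mp (this ▸ hj1)).2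
        have hvni : v ∉ ((U 1)ᶜ : Finset (Fin n)) := by simp [hvB]
        have hins : insert v ((U 1)ᶜ : Finset (Fin n)) ⊆ U i :=
          Finset.insert_subset hvi hsub
        have := Finset.card_le_card hins
        rw [Finset.card_insert_of_notMem hvni, hcompl1] at this
        omega
      · -- v in neither: U i = univ
        have hsub : (Finset.univ : Finset (Fin n)) ⊆ U i := by
          intro y _
          by_cases hyv : y = v
          · exact hyv ▸ hvi
          by_cases hyA : y ∈ U 0
          · -- y ∉ U 1, use hcross y v
            have hyB : y ∉ U 1 := fun h => hABdisj y hyA h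
            obtain ⟨j, hj1, hj2⟩ := hcross y v hyB hvA hyv
            have := honly j hj2
            exact ((hSmem y i).mp (this ▸ hj1)).2
          · obtain ⟨j, hj1, hj2⟩ := hcross v y hvB hyA (fun h => hyv h.symm)
            have := honly j hj1
            exact ((hSmem y i).mp (this ▸ hj2)).2
        have := Finset.card_le_card hsub
        rw [Finset.card_univ, Fintype.card_fin] at this
        omega
  -- sum identity
  have hsum : ∑ i ∈ T, (U i).card = ∑ v : Fin n, (S v).card := by
    have h1 : ∀ i : Fin 6, (U i).card = ∑ v : Fin n, (if v ∈ U i then 1 else 0) := by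
      intro i
      rw [← Finset.card_filter]
      congr 1
      ext v; simp
    have h2 : ∀ v : Fin n, (S v).card = ∑ i ∈ T, (if v ∈ U i then 1 else 0) := by
      intro v; rw [hS]; exact Finset.card_filter _ _
    calc ∑ i ∈ T, (U i).card = ∑ i ∈ T, ∑ v : Fin n, (if v ∈ U i then 1 else 0) := by
          exact Finset.sum_congr rfl (fun i _ => h1 i)
      _ = ∑ v : Fin n, ∑ i ∈ T, (if v ∈ U i then 1 else 0) := Finset.sum_comm
      _ = ∑ v : Fin n, (S v).card := Finset.sum_congr rfl (fun v _ => (h2 v).symm)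
  have hTsum : ∑ i ∈ T, (U i).card
      = (U 2).card + (U 3).card + (U 4).card + (U 5).card := by
    rw [hT]
    rw [show ({2,3,4,5} : Finset (Fin 6))
        = insert 2 (insert 3 (insert 4 ({5} : Finset (Fin 6)))) from rfl]
    rw [Finset.sum_insert (by decide), Finset.sum_insert (by decide),
      Finset.sum_insert (by decide), Finset.sum_singleton]
    ring
  have hlow : 2 * n ≤ ∑ i ∈ T, (U i).card := by
    rw [hsum]
    calc 2 * n = ∑ _v : Fin n, 2 := by
          simp [Finset.card_univ, Fintype.card_fin]; ring
      _ ≤ ∑ v : Fin n, (S v).card := Finset.sum_le_sum (fun v _ => hs2 v)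
  have hc2 := hcon 2
  have hc3 := hcon 3
  have hc4 := hcon 4
  have hc5 := hcon 5
  by_cases h4 : n % 4 = 2
  case neg =>
    have hk : kfun n = (n + 1) / 2 := by unfold kfun; simp [h4]
    omega
  -- now n % 4 = 2
  have hk : kfun n = n / 2 + 1 := by unfold kfun; simp [h4]
  have hU2 : (U 2).card = n / 2 := by omega
  have hU3 : (U 3).card = n / 2 := by omega
  have hU4 : (U 4).card = n / 2 := by omega
  have hU5 : (U 5).card = n / 2 := by omega
  -- every S v has exactly 2 elements
  have hseq : ∀ v : Fin n, (S v).card = 2 := by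
    intro v
    by_contra hne
    have h3 : 2 < (S v).card := lt_of_le_of_ne (hs2 v) (fun h => hne h.symm)
    have hlt : ∑ _v : Fin n, 2 < ∑ v : Fin n, (S v).card :=
      Finset.sum_lt_sum (fun w _ => hs2 w) ⟨v, Finset.mem_univ v, h3⟩
    have h2n : ∑ _v : Fin n, 2 = 2 * n := by
      simp [Finset.card_univ, Fintype.card_fin]; ring
    omega
  -- classification of labels
  set L : Finset (Finset (Fin 6)) := {{2,3},{2,4},{2,5},{3,4},{3,5},{4,5}} with hL
  have hclassify : ∀ P : Finset (Fin 6), P ⊆ T → P.card = 2 → P ∈ L := by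
    rw [hT, hL]; decide
  have hclass : ∀ v : Fin n, S v ∈ L := fun v =>
    hclassify (S v) (by rw [hS]; exact Finset.filter_subset _ _) (hseq v)
  set x : Finset (Fin 6) → ℕ :=
    fun P => (Finset.univ.filter (fun v : Fin n => S v = P)).card with hx
  set aA : Finset (Fin 6) → ℕ :=
    fun P => ((U 0).filter (fun v : Fin n => S v = P)).card with haA
  have hLsum : ∀ f : Finset (Fin 6) → ℕ,
      ∑ P ∈ L, f P = f {2,3} + f {2,4} + f {2,5} + f {3,4} + f {3,5} + f {4,5} := by
    intro f
    rw [hL]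
    rw [show ({{2,3},{2,4},{2,5},{3,4},{3,5},{4,5}} : Finset (Finset (Fin 6)))
        = insert {2,3} (insert {2,4} (insert {2,5} (insert {3,4}
            (insert {3,5} ({{4,5}} : Finset (Finset (Fin 6))))))) from rfl]
    rw [Finset.sum_insert (by decide), Finset.sum_insert (by decide),
      Finset.sum_insert (by decide), Finset.sum_insert (by decide),
      Finset.sum_insert (by decide), Finset.sum_singleton]
    ring
  have hn_eq : n = ∑ P ∈ L, x P := by
    have := Finset.card_eq_sum_card_fiberwise (f := S) (s := Finset.univ) (t := L)
      (fun v _ => hclass v)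
    rw [Finset.card_univ, Fintype.card_fin] at this
    exact this
  have ha_eq : (U 0).card = ∑ P ∈ L, aA P :=
    Finset.card_eq_sum_card_fiberwise (f := S) (s := U 0) (t := L)
      (fun v _ => hclass v)
  have hU_eq : ∀ i : Fin 6, i ∈ T →
      (U i).card = ∑ P ∈ L, (if i ∈ P then x P else 0) := by
    intro i hiT
    rw [Finset.card_eq_sum_card_fiberwise (f := S) (s := U i) (t := L)
      (fun v _ => hclass v)]
    apply Finset.sum_congr rfl
    intro P _
    by_cases hiP : i ∈ P
    · rw [if_pos hiP, hx]
      congr 1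
      ext v
      simp only [Finset.mem_filter, Finset.mem_univ, true_and, and_iff_right_iff_imp]
      intro hvP
      have : i ∈ S v := hvP ▸ hiP
      exact ((hSmem v i).mp this).2
    · rw [if_neg hiP]
      rw [Finset.card_eq_zero]
      apply Finset.eq_empty_of_forall_notMem
      intro v hv
      obtain ⟨hvU, hvP⟩ := Finset.mem_filter.mp hv
      exact hiP (hvP ▸ ((hSmem v i).mpr ⟨hiT, hvU⟩))
  have hU2x : (U 2).card = x {2,3} + x {2,4} + x {2,5} := by
    rw [hU_eq 2 (by rw [hT]; decide), hLsum]
    norm_num [show (2:Fin 6) ∈ ({2,3}:Finset (Fin 6)) from by decide,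
      show (2:Fin 6) ∈ ({2,4}:Finset (Fin 6)) from by decide,
      show (2:Fin 6) ∈ ({2,5}:Finset (Fin 6)) from by decide,
      show (2:Fin 6) ∉ ({3,4}:Finset (Fin 6)) from by decide,
      show (2:Fin 6) ∉ ({3,5}:Finset (Fin 6)) from by decide,
      show (2:Fin 6) ∉ ({4,5}:Finset (Fin 6)) from by decide]
  have hU3x : (U 3).card = x {2,3} + x {3,4} + x {3,5} := by
    rw [hU_eq 3 (by rw [hT]; decide), hLsum]
    norm_num [show (3:Fin 6) ∈ ({2,3}:Finset (Fin 6)) from by decide,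
      show (3:Fin 6) ∉ ({2,4}:Finset (Fin 6)) from by decide,
      show (3:Fin 6) ∉ ({2,5}:Finset (Fin 6)) from by decide,
      show (3:Fin 6) ∈ ({3,4}:Finset (Fin 6)) from by decide,
      show (3:Fin 6) ∈ ({3,5}:Finset (Fin 6)) from by decide,
      show (3:Fin 6) ∉ ({4,5}:Finset (Fin 6)) from by decide]
  have hU4x : (U 4).card = x {2,4} + x {3,4} + x {4,5} := by
    rw [hU_eq 4 (by rw [hT]; decide), hLsum]
    norm_num [show (4:Fin 6) ∉ ({2,3}:Finset (Fin 6)) from by decide,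
      show (4:Fin 6) ∈ ({2,4}:Finset (Fin 6)) from by decide,
      show (4:Fin 6) ∉ ({2,5}:Finset (Fin 6)) from by decide,
      show (4:Fin 6) ∈ ({3,4}:Finset (Fin 6)) from by decide,
      show (4:Fin 6) ∉ ({3,5}:Finset (Fin 6)) from by decide,
      show (4:Fin 6) ∈ ({4,5}:Finset (Fin 6)) from by decide]
  have hU5x : (U 5).card = x {2,5} + x {3,5} + x {4,5} := by
    rw [hU_eq 5 (by rw [hT]; decide), hLsum]
    norm_num [show (5:Fin 6) ∉ ({2,3}:Finset (Fin 6)) from by decide,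
      show (5:Fin 6) ∉ ({2,4}:Finset (Fin 6)) from by decide,
      show (5:Fin 6) ∈ ({2,5}:Finset (Fin 6)) from by decide,
      show (5:Fin 6) ∉ ({3,4}:Finset (Fin 6)) from by decide,
      show (5:Fin 6) ∈ ({3,5}:Finset (Fin 6)) from by decide,
      show (5:Fin 6) ∈ ({4,5}:Finset (Fin 6)) from by decide]
  have hnx : n = x {2,3} + x {2,4} + x {2,5} + x {3,4} + x {3,5} + x {4,5} := by
    rw [hn_eq, hLsum]
  have hxa : x {2,3} = x {4,5} := by omega
  have hxb : x {2,4} = x {3,5} := by omega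
  have hxc : x {2,5} = x {3,4} := by omega
  -- complementary constraint
  have hcompl : ∀ u w : Fin n, S u ∩ S w = ∅ → u ≠ w →
      (u ∈ U 0 ∧ w ∈ U 0) ∨ (u ∈ U 1 ∧ w ∈ U 1) := by
    intro u w hdisjS hne
    have key1 : u ∈ U 1 ∨ w ∈ U 0 := by
      by_contra h
      push_neg at h
      obtain ⟨j, hj1, hj2⟩ := hcross u w h.1 h.2 hne
      have : j ∈ S u ∩ S w := Finset.mem_inter.mpr ⟨hj1, hj2⟩
      rw [hdisjS] at this
      exact absurd this (Finset.notMem_empty j)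
    have key2 : w ∈ U 1 ∨ u ∈ U 0 := by
      by_contra h
      push_neg at h
      obtain ⟨j, hj1, hj2⟩ := hcross w u h.1 h.2 hne.symm
      have : j ∈ S u ∩ S w := Finset.mem_inter.mpr ⟨hj2, hj1⟩
      rw [hdisjS] at this
      exact absurd this (Finset.notMem_empty j)
    rcases key1 with h1 | h1 <;> rcases key2 with h2 | h2
    · exact Or.inr ⟨h1, h2⟩
    · exact absurd h1 (fun h => hABdisj u h2 h)
    · exact absurd h2 (fun h => hABdisj w h1 h)
    · exact Or.inl ⟨h2, h1⟩
  -- per complementary pair: aA P + aA Q is even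
  have hpair : ∀ P Q : Finset (Fin 6), P.Nonempty → P ∩ Q = ∅ → x P = x Q →
      ∃ k, aA P + aA Q = 2 * k := by
    intro P Q hPne hPQ hxeq
    rcases Nat.eq_zero_or_pos (x P) with h0 | hpos
    · refine ⟨0, ?_⟩
      have h1 : aA P ≤ x P := Finset.card_le_card (by
        intro v hv
        obtain ⟨_, hvP⟩ := Finset.mem_filter.mp hv
        exact Finset.mem_filter.mpr ⟨Finset.mem_univ v, hvP⟩)
      have h2 : aA Q ≤ x Q := Finset.card_le_card (by
        intro v hv
        obtain ⟨_, hvP⟩ := Finset.mem_filter.mp hv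
        exact Finset.mem_filter.mpr ⟨Finset.mem_univ v, hvP⟩)
      omega
    · have hQpos : 0 < x Q := hxeq ▸ hpos
      obtain ⟨u0, hu0⟩ := Finset.card_pos.mp hpos
      obtain ⟨w0, hw0⟩ := Finset.card_pos.mp hQpos
      have hSu0 : S u0 = P := (Finset.mem_filter.mp hu0).2
      have hSw0 : S w0 = Q := (Finset.mem_filter.mp hw0).2
      have hPQne : P ≠ Q := by
        intro h
        obtain ⟨p, hp⟩ := hPne
        have : p ∈ P ∩ Q := Finset.mem_inter.mpr ⟨hp, h ▸ hp⟩
        rw [hPQ] at this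
        exact absurd this (Finset.notMem_empty p)
      have hdiffclass : ∀ u' w' : Fin n, S u' = P → S w' = Q → u' ≠ w' := by
        intro u' w' hu' hw' h
        exact hPQne (by rw [← hu', ← hw', h])
      -- both in A or both in B
      rcases hcompl u0 w0 (by rw [hSu0, hSw0]; exact hPQ)
          (hdiffclass u0 w0 hSu0 hSw0) with ⟨huA, hwA⟩ | ⟨huB, hwB⟩
      · -- both classes inside U 0
        have hwB : w0 ∉ U 1 := fun h => hABdisj w0 hwA h
        have huB : u0 ∉ U 1 := fun h => hABdisj u0 huA h
        have hPA : ∀ u' : Fin n, S u' = P → u' ∈ U 0 := by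
          intro u' hu'
          rcases hcompl u' w0 (by rw [hu', hSw0]; exact hPQ)
              (hdiffclass u' w0 hu' hSw0) with h | h
          · exact h.1
          · exact absurd h.2 hwB
        have hQA : ∀ w' : Fin n, S w' = Q → w' ∈ U 0 := by
          intro w' hw'
          rcases hcompl u0 w' (by rw [hSu0, hw']; exact hPQ)
              (hdiffclass u0 w' hSu0 hw') with h | h
          · exact h.2
          · exact absurd h.1 huB
        have haP : aA P = x P := by
          apply le_antisymm
          · exact Finset.card_le_card (by
              intro v hv
              obtain ⟨_, hvP⟩ := Finset.mem_filter.mp hv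
              exact Finset.mem_filter.mpr ⟨Finset.mem_univ v, hvP⟩)
          · exact Finset.card_le_card (by
              intro v hv
              obtain ⟨_, hvP⟩ := Finset.mem_filter.mp hv
              exact Finset.mem_filter.mpr ⟨hPA v hvP, hvP⟩)
        have haQ : aA Q = x Q := by
          apply le_antisymm
          · exact Finset.card_le_card (by
              intro v hv
              obtain ⟨_, hvP⟩ := Finset.mem_filter.mp hv
              exact Finset.mem_filter.mpr ⟨Finset.mem_univ v, hvP⟩)
          · exact Finset.card_le_card (by
              intro v hv
              obtain ⟨_, hvP⟩ := Finset.mem_filter.mp hv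
              exact Finset.mem_filter.mpr ⟨hQA v hvP, hvP⟩)
        exact ⟨x P, by omega⟩
      · -- both classes inside U 1, hence aA P = aA Q = 0
        have hwA : w0 ∉ U 0 := fun h => hABdisj w0 h hwB
        have huA : u0 ∉ U 0 := fun h => hABdisj u0 h huB
        have hPB : ∀ u' : Fin n, S u' = P → u' ∈ U 1 := by
          intro u' hu'
          rcases hcompl u' w0 (by rw [hu', hSw0]; exact hPQ)
              (hdiffclass u' w0 hu' hSw0) with h | h
          · exact absurd h.2 hwA
          · exact h.1
        have hQB : ∀ w' : Fin n, S w' = Q → w' ∈ U 1 := by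
          intro w' hw'
          rcases hcompl u0 w' (by rw [hSu0, hw']; exact hPQ)
              (hdiffclass u0 w' hSu0 hw') with h | h
          · exact absurd h.1 huA
          · exact h.2
        have haP : aA P = 0 := by
          rw [haA]
          rw [Finset.card_eq_zero]
          apply Finset.eq_empty_of_forall_notMem
          intro v hv
          obtain ⟨hvA, hvP⟩ := Finset.mem_filter.mp hv
          exact hABdisj v hvA (hPB v hvP)
        have haQ : aA Q = 0 := by
          rw [haA]
          rw [Finset.card_eq_zero]
          apply Finset.eq_empty_of_forall_notMem
          intro v hv
          obtain ⟨hvA, hvP⟩ := Finset.mem_filter.mp hv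
          exact hABdisj v hvA (hQB v hvP)
        exact ⟨0, by omega⟩
  -- every vertex is in U 0 or U 1
  have hmem : ∀ (v : Fin n) (Q : Finset (Fin 6)), S v ∩ Q = ∅ → 0 < x Q →
      v ∈ U 0 ∨ v ∈ U 1 := by
    intro v Q hdisQ hpos
    obtain ⟨w, hw⟩ := Finset.card_pos.mp hpos
    have hSw : S w = Q := (Finset.mem_filter.mp hw).2
    have hne : v ≠ w := by
      intro h
      rw [h, hSw] at hdisQ
      have : Q ∩ Q = Q := Finset.inter_self Q
      rw [this] at hdisQ
      have := hseq w
      rw [hSw, hdisQ] at this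
      simp at this
    rcases hcompl v w (by rw [hSw]; exact hdisQ) hne with h | h
    · exact Or.inl h.1
    · exact Or.inr h.1
  have hABv : ∀ v : Fin n, v ∈ U 0 ∨ v ∈ U 1 := by
    intro v
    have hvP : 0 < x (S v) :=
      Finset.card_pos.mpr ⟨v, Finset.mem_filter.mpr ⟨Finset.mem_univ v, rfl⟩⟩
    have hcl := hclass v
    rw [hL] at hcl
    simp only [Finset.mem_insert, Finset.mem_singleton] at hcl
    rcases hcl with h | h | h | h | h | h
    · refine hmem v {4,5} (by rw [h]; decide) ?_
      rw [h] at hvP; omega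
    · refine hmem v {3,5} (by rw [h]; decide) ?_
      rw [h] at hvP; omega
    · refine hmem v {3,4} (by rw [h]; decide) ?_
      rw [h] at hvP; omega
    · refine hmem v {2,5} (by rw [h]; decide) ?_
      rw [h] at hvP; omega
    · refine hmem v {2,4} (by rw [h]; decide) ?_
      rw [h] at hvP; omega
    · refine hmem v {2,3} (by rw [h]; decide) ?_
      rw [h] at hvP; omega
  have hunion : (U 0) ∪ (U 1) = Finset.univ := by
    apply Finset.eq_univ_of_forall
    intro v
    rcases hABv v with h | h
    · exact Finset.mem_union_left _ h
    · exact Finset.mem_union_right _ h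
  have hab : (U 0).card + (U 1).card = n := by
    rw [← Finset.card_union_of_disjoint hdisj, hunion, Finset.card_univ,
      Fintype.card_fin]
  -- parity
  obtain ⟨k1, hk1⟩ := hpair {2,3} {4,5} (by decide) (by decide) hxa
  obtain ⟨k2, hk2⟩ := hpair {2,4} {3,5} (by decide) (by decide) hxb
  obtain ⟨k3, hk3⟩ := hpair {2,5} {3,4} (by decide) (by decide) hxc
  have haL : (U 0).card
      = aA {2,3} + aA {2,4} + aA {2,5} + aA {3,4} + aA {3,5} + aA {4,5} := by
    rw [ha_eq, hLsum]
  omega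
end

section
/- Let χ be a 3-coloring of E(K_n), and for each color c ∈ {1,2,3} let G_c denote the color-c graph of χ. Suppose V_1 is a set of vertices contained in a single connected component of G_1, and V_2 is a set of vertices contained in a single connected component of G_2. Then there exist sets X_1, X_2, X_3 ⊆ V_1 ∪ V_2 such that: V_1 ⊆ X_1 and V_2 ⊆ X_2; for each c ∈ {1,2,3}, the set X_c is either empty or contained in a single connected component of G_c; and at least one of the following holds: X_1 = V_1 ∪ V_2, or X_2 = V_1 ∪ V_2, or (V_1 \ X_2) ∪ (V_2 \ X_1) ⊆ X_3. -/
/-- The color-`c` graph of a 3-coloring `χ` of `E(K_n)`: its edges are exactly the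
(non-loop) pairs assigned color `c` by `χ`. -/
def colorGraph {n : ℕ} (χ : Sym2 (Fin n) → Fin 3) (c : Fin 3) : SimpleGraph (Fin n) :=
  SimpleGraph.fromEdgeSet {e | χ e = c}

lemma colorGraph_adj {n : ℕ} (χ : Sym2 (Fin n) → Fin 3) (c : Fin 3) (x y : Fin n)
    (hxy : x ≠ y) (h : χ s(x, y) = c) : (colorGraph χ c).Adj x y := by
  simp [colorGraph, SimpleGraph.fromEdgeSet_adj, h, hxy]

/-- CompExtend (existence content): if `V₁` lies in a single connected component of
the color-1 graph and `V₂` in a single connected component of the color-2 graph, then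
there are `X₁, X₂, X₃ ⊆ V₁ ∪ V₂` with `V₁ ⊆ X₁`, `V₂ ⊆ X₂`, each `X_c` empty or
inside one component of the color-`c` graph, and `X₁ = V₁ ∪ V₂`, or `X₂ = V₁ ∪ V₂`,
or `(V₁ \ X₂) ∪ (V₂ \ X₁) ⊆ X₃`. -/
theorem compExtend (n : ℕ) (χ : Sym2 (Fin n) → Fin 3) (V₁ V₂ : Set (Fin n))
    (hV₁ : ∀ x ∈ V₁, ∀ y ∈ V₁, (colorGraph χ 0).Reachable x y)
    (hV₂ : ∀ x ∈ V₂, ∀ y ∈ V₂, (colorGraph χ 1).Reachable x y) :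
    ∃ X₁ X₂ X₃ : Set (Fin n),
      X₁ ⊆ V₁ ∪ V₂ ∧ X₂ ⊆ V₁ ∪ V₂ ∧ X₃ ⊆ V₁ ∪ V₂ ∧
      V₁ ⊆ X₁ ∧ V₂ ⊆ X₂ ∧
      (∀ x ∈ X₁, ∀ y ∈ X₁, (colorGraph χ 0).Reachable x y) ∧
      (∀ x ∈ X₂, ∀ y ∈ X₂, (colorGraph χ 1).Reachable x y) ∧
      (∀ x ∈ X₃, ∀ y ∈ X₃, (colorGraph χ 2).Reachable x y) ∧
      (X₁ = V₁ ∪ V₂ ∨ X₂ = V₁ ∪ V₂ ∨ (V₁ \ X₂) ∪ (V₂ \ X₁) ⊆ X₃) := by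
  rcases V₁.eq_empty_or_nonempty with h1 | ⟨a₁, ha₁⟩
  · subst h1
    exact ⟨∅, V₂, ∅, by simp, by simp, by simp, le_rfl, le_rfl, by simp, hV₂, by simp,
      Or.inr (Or.inl (by simp))⟩
  rcases V₂.eq_empty_or_nonempty with h2 | ⟨a₂, ha₂⟩
  · subst h2
    exact ⟨V₁, ∅, ∅, by simp, by simp, by simp, le_rfl, le_rfl, hV₁, by simp, by simp,
      Or.inl (by simp)⟩
  set X₁ : Set (Fin n) := {v ∈ V₁ ∪ V₂ | (colorGraph χ 0).Reachable v a₁} with hX₁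
  set X₂ : Set (Fin n) := {v ∈ V₁ ∪ V₂ | (colorGraph χ 1).Reachable v a₂} with hX₂
  have hV₁X₁ : V₁ ⊆ X₁ := fun x hx => ⟨Or.inl hx, hV₁ x hx a₁ ha₁⟩
  have hV₂X₂ : V₂ ⊆ X₂ := fun x hx => ⟨Or.inr hx, hV₂ x hx a₂ ha₂⟩
  have hX₁sub : X₁ ⊆ V₁ ∪ V₂ := fun x hx => hx.1
  have hX₂sub : X₂ ⊆ V₁ ∪ V₂ := fun x hx => hx.1
  have hX₁conn : ∀ x ∈ X₁, ∀ y ∈ X₁, (colorGraph χ 0).Reachable x y :=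
    fun x hx y hy => hx.2.trans hy.2.symm
  have hX₂conn : ∀ x ∈ X₂, ∀ y ∈ X₂, (colorGraph χ 1).Reachable x y :=
    fun x hx y hy => hx.2.trans hy.2.symm
  -- key edge lemma
  have key : ∀ x ∈ V₁ \ X₂, ∀ y ∈ V₂ \ X₁, (colorGraph χ 2).Adj x y := by
    rintro x ⟨hx1, hx2⟩ y ⟨hy2, hy1⟩
    have hxy : x ≠ y := by
      rintro rfl
      exact hx2 ⟨Or.inr hy2, hV₂ x hy2 a₂ ha₂⟩
    have h0 : χ s(x, y) ≠ 0 := by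
      intro h
      exact hy1 ⟨Or.inr hy2,
        ((colorGraph_adj χ 0 x y hxy h).symm.reachable).trans (hV₁ x hx1 a₁ ha₁)⟩
    have h1 : χ s(x, y) ≠ 1 := by
      intro h
      exact hx2 ⟨Or.inl hx1,
        ((colorGraph_adj χ 1 x y hxy h).reachable).trans (hV₂ y hy2 a₂ ha₂)⟩
    have h2 : χ s(x, y) = 2 := by omega
    exact colorGraph_adj χ 2 x y hxy h2
  by_cases hA : V₂ ⊆ X₁
  · refine ⟨X₁, X₂, ∅, hX₁sub, hX₂sub, by simp, hV₁X₁, hV₂X₂, hX₁conn, hX₂conn,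
      by simp, Or.inl ?_⟩
    exact le_antisymm hX₁sub (Set.union_subset hV₁X₁ hA)
  by_cases hB : V₁ ⊆ X₂
  · refine ⟨X₁, X₂, ∅, hX₁sub, hX₂sub, by simp, hV₁X₁, hV₂X₂, hX₁conn, hX₂conn,
      by simp, Or.inr (Or.inl ?_)⟩
    exact le_antisymm hX₂sub (Set.union_subset hB hV₂X₂)
  obtain ⟨y₀, hy₀V, hy₀X⟩ := Set.not_subset.mp hA
  obtain ⟨x₀, hx₀V, hx₀X⟩ := Set.not_subset.mp hB
  set X₃ : Set (Fin n) := (V₁ \ X₂) ∪ (V₂ \ X₁) with hX₃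
  have hX₃conn : ∀ x ∈ X₃, ∀ y ∈ X₃, (colorGraph χ 2).Reachable x y := by
    rintro x (hx | hx) y (hy | hy)
    · exact ((key x hx y₀ ⟨hy₀V, hy₀X⟩).reachable).trans
        ((key y hy y₀ ⟨hy₀V, hy₀X⟩).reachable).symm
    · exact (key x hx y hy).reachable
    · exact ((key y hy x hx).reachable).symm
    · exact ((key x₀ ⟨hx₀V, hx₀X⟩ x hx).reachable).symm.trans
        ((key x₀ ⟨hx₀V, hx₀X⟩ y hy).reachable)
  refine ⟨X₁, X₂, X₃, hX₁sub, hX₂sub, ?_, hV₁X₁, hV₂X₂, hX₁conn, hX₂conn, hX₃conn,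
    Or.inr (Or.inr le_rfl)⟩
  rintro x (hx | hx)
  · exact Or.inl hx.1
  · exact Or.inr hx.1
end

section
/- For every integer n ≥ 1 and every 3-coloring χ of E(K_n), there exist subsets X_1, X_2, X_3, X_4, X_5, X_6 of the vertex set of K_n (some possibly empty) such that: X_1 and X_2 are each either empty or contained in a single connected component of the color-1 graph, and X_1 ∩ X_2 = ∅; X_3 and X_4 are each either empty or contained in a single connected component of the color-2 graph, and X_3 ∩ X_4 = ∅; X_5 and X_6 are each either empty or contained in a single connected component of the color-3 graph, and X_5 ∩ X_6 = ∅; and every pair of distinct vertices of K_n is contained together in some X_i. -/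
lemma fin3_mem : ∀ c : Fin 3, c = 0 ∨ c = 1 ∨ c = 2 := by decide

lemma fin3_perm (i j k : Fin 3) (hij : i ≠ j) (hik : i ≠ k) (hjk : j ≠ k)
    (P : Fin 3 → Prop) (h : P 0 ∨ P 1 ∨ P 2) : P i ∨ P j ∨ P k := by
  rcases fin3_mem i with hi | hi | hi <;> rcases fin3_mem j with hj | hj | hj <;>
    rcases fin3_mem k with hk | hk | hk <;> subst hi <;> subst hj <;> subst hk <;>
      simp_all <;> tauto

lemma six_cover_rel {V : Type*} (r : Fin 3 → V → V → Prop)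
    (hrefl : ∀ c v, r c v v)
    (hsymm : ∀ c u v, r c u v → r c v u)
    (htrans : ∀ c u v w, r c u v → r c v w → r c u w)
    (htot : ∀ u v : V, u ≠ v → r 0 u v ∨ r 1 u v ∨ r 2 u v)
    (x : V) :
    ∃ X : Fin 6 → Set V,
      (∀ a ∈ X 0, ∀ b ∈ X 0, r 0 a b) ∧
      (∀ a ∈ X 1, ∀ b ∈ X 1, r 0 a b) ∧
      Disjoint (X 0) (X 1) ∧
      (∀ a ∈ X 2, ∀ b ∈ X 2, r 1 a b) ∧
      (∀ a ∈ X 3, ∀ b ∈ X 3, r 1 a b) ∧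
      Disjoint (X 2) (X 3) ∧
      (∀ a ∈ X 4, ∀ b ∈ X 4, r 2 a b) ∧
      (∀ a ∈ X 5, ∀ b ∈ X 5, r 2 a b) ∧
      Disjoint (X 4) (X 5) ∧
      (∀ u v : V, u ≠ v → ∃ i : Fin 6, u ∈ X i ∧ v ∈ X i) := by
  classical
  -- For each color `i` (with the other two colors `j`, `k`), there is a single
  -- `r i`-class containing all "bad" pairs (pairs related by `r i` that avoid the
  -- three classes of `x`).
  have aux : ∀ i j k : Fin 3, i ≠ j → i ≠ k → j ≠ k →
      ∃ S : Set V, (∀ a ∈ S, ∀ b ∈ S, r i a b) ∧ (∀ z ∈ S, ¬ r i x z) ∧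
        (∀ s t, r i s t → ¬ r i x s → r j x s → ¬ r k x s → r k x t → ¬ r j x t →
          s ∈ S ∧ t ∈ S) := by
    intro i j k hij hik hjk
    by_cases hB : ∃ s t, r i s t ∧ ¬ r i x s ∧ r j x s ∧ ¬ r k x s ∧ r k x t ∧ ¬ r j x t
    · obtain ⟨s₀, t₀, h1, h2, h3, h4, h5, h6⟩ := hB
      refine ⟨{z | r i s₀ z}, ?_, ?_, ?_⟩
      · intro a ha b hb
        exact htrans _ _ _ _ (hsymm _ _ _ ha) hb
      · intro z hz hxz
        exact h2 (htrans _ _ _ _ hxz (hsymm _ _ _ hz))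
      · intro s t hst hs1 hs2 hs3 ht1 ht2
        have hst0 : s ≠ t₀ := by
          intro he; subst he; exact h6 hs2
        have hkey : r i s t₀ := by
          rcases fin3_perm i j k hij hik hjk (fun c => r c s t₀) (htot s t₀ hst0) with
            h | h | h
          · exact h
          · exact absurd (htrans _ _ _ _ hs2 h) h6
          · exact absurd (htrans _ _ _ _ h5 (hsymm _ _ _ h)) hs3
        have hs0s : r i s₀ s := htrans _ _ _ _ h1 (hsymm _ _ _ hkey)
        exact ⟨hs0s, htrans _ _ _ _ hs0s hst⟩
    · refine ⟨∅, by simp, by simp, ?_⟩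
      intro s t hst hs1 hs2 hs3 ht1 ht2
      exact absurd ⟨s, t, hst, hs1, hs2, hs3, ht1, ht2⟩ hB
  -- Coverage: any `r i`-related pair lies in one of the classes of `x` or is bad.
  have cover : ∀ i j k : Fin 3, i ≠ j → i ≠ k → j ≠ k → ∀ S : Set V,
      (∀ s t, r i s t → ¬ r i x s → r j x s → ¬ r k x s → r k x t → ¬ r j x t →
        s ∈ S ∧ t ∈ S) →
      ∀ u v, u ≠ v → r i u v →
        (r i x u ∧ r i x v) ∨ (r j x u ∧ r j x v) ∨ (r k x u ∧ r k x v) ∨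
          (u ∈ S ∧ v ∈ S) := by
    intro i j k hij hik hjk S hS u v huv hruv
    by_cases h0 : r i x u
    · exact Or.inl ⟨h0, htrans _ _ _ _ h0 hruv⟩
    by_cases hjc : r j x u ∧ r j x v
    · exact Or.inr (Or.inl hjc)
    by_cases hkc : r k x u ∧ r k x v
    · exact Or.inr (Or.inr (Or.inl hkc))
    have hv0 : ¬ r i x v := fun h => h0 (htrans _ _ _ _ h (hsymm _ _ _ hruv))
    have hxu : x ≠ u := fun e => h0 (e ▸ hrefl i x)
    have hxv : x ≠ v := fun e => hv0 (e ▸ hrefl i x)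
    have hud : r j x u ∨ r k x u := by
      rcases fin3_perm i j k hij hik hjk (fun c => r c x u) (htot x u hxu) with h | h | h
      · exact absurd h h0
      · exact Or.inl h
      · exact Or.inr h
    have hvd : r j x v ∨ r k x v := by
      rcases fin3_perm i j k hij hik hjk (fun c => r c x v) (htot x v hxv) with h | h | h
      · exact absurd h hv0
      · exact Or.inl h
      · exact Or.inr h
    rcases hud with huj | huk
    · by_cases hku : r k x u
      · have hvj : ¬ r j x v := fun h => hjc ⟨huj, h⟩
        have hvk : ¬ r k x v := fun h => hkc ⟨hku, h⟩
        rcases hvd with h | h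
        · exact absurd h hvj
        · exact absurd h hvk
      · have hvj : ¬ r j x v := fun h => hjc ⟨huj, h⟩
        have hvk : r k x v := hvd.resolve_left hvj
        exact Or.inr (Or.inr (Or.inr (hS u v hruv h0 huj hku hvk hvj)))
    · by_cases hju : r j x u
      · have hvj : ¬ r j x v := fun h => hjc ⟨hju, h⟩
        have hvk : ¬ r k x v := fun h => hkc ⟨huk, h⟩
        rcases hvd with h | h
        · exact absurd h hvj
        · exact absurd h hvk
      · have hvk : ¬ r k x v := fun h => hkc ⟨huk, h⟩
        have hvj : r j x v := hvd.resolve_right hvk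
        have := hS v u (hsymm _ _ _ hruv) hv0 hvj hvk huk hju
        exact Or.inr (Or.inr (Or.inr ⟨this.2, this.1⟩))
  obtain ⟨S0, hS0a, hS0b, hS0c⟩ := aux 0 1 2 (by decide) (by decide) (by decide)
  obtain ⟨S1, hS1a, hS1b, hS1c⟩ := aux 1 0 2 (by decide) (by decide) (by decide)
  obtain ⟨S2, hS2a, hS2b, hS2c⟩ := aux 2 0 1 (by decide) (by decide) (by decide)
  set A0 : Set V := {z | r 0 x z} with hA0
  set A1 : Set V := {z | r 1 x z} with hA1
  set A2 : Set V := {z | r 2 x z} with hA2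
  set X : Fin 6 → Set V := fun i =>
    if i = 0 then A0 else if i = 1 then S0 else if i = 2 then A1 else
      if i = 3 then S1 else if i = 4 then A2 else S2 with hXdef
  have hX0 : X 0 = A0 := by simp [hXdef]
  have hX1 : X 1 = S0 := by simp [hXdef]
  have hX2 : X 2 = A1 := by simp [hXdef]
  have hX3 : X 3 = S1 := by simp [hXdef]
  have hX4 : X 4 = A2 := by simp [hXdef]
  have hX5 : X 5 = S2 := by simp [hXdef]
  have hAclass : ∀ c : Fin 3, ∀ a ∈ {z | r c x z}, ∀ b ∈ {z | r c x z}, r c a b := by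
    intro c a ha b hb
    exact htrans _ _ _ _ (hsymm _ _ _ ha) hb
  refine ⟨X, ?_, ?_, ?_, ?_, ?_, ?_, ?_, ?_, ?_, ?_⟩
  · rw [hX0]; exact hAclass 0
  · rw [hX1]; exact hS0a
  · rw [hX0, hX1, Set.disjoint_left]
    intro a ha hb
    exact hS0b a hb ha
  · rw [hX2]; exact hAclass 1
  · rw [hX3]; exact hS1a
  · rw [hX2, hX3, Set.disjoint_left]
    intro a ha hb
    exact hS1b a hb ha
  · rw [hX4]; exact hAclass 2
  · rw [hX5]; exact hS2a
  · rw [hX4, hX5, Set.disjoint_left]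
    intro a ha hb
    exact hS2b a hb ha
  · intro u v huv
    have hc := htot u v huv
    rcases hc with h | h | h
    · rcases cover 0 1 2 (by decide) (by decide) (by decide) S0 hS0c u v huv h with
        h' | h' | h' | h'
      · exact ⟨0, by rw [hX0]; exact h'.1, by rw [hX0]; exact h'.2⟩
      · exact ⟨2, by rw [hX2]; exact h'.1, by rw [hX2]; exact h'.2⟩
      · exact ⟨4, by rw [hX4]; exact h'.1, by rw [hX4]; exact h'.2⟩
      · exact ⟨1, by rw [hX1]; exact h'.1, by rw [hX1]; exact h'.2⟩
    · rcases cover 1 0 2 (by decide) (by decide) (by decide) S1 hS1c u v huv h with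
        h' | h' | h' | h'
      · exact ⟨2, by rw [hX2]; exact h'.1, by rw [hX2]; exact h'.2⟩
      · exact ⟨0, by rw [hX0]; exact h'.1, by rw [hX0]; exact h'.2⟩
      · exact ⟨4, by rw [hX4]; exact h'.1, by rw [hX4]; exact h'.2⟩
      · exact ⟨3, by rw [hX3]; exact h'.1, by rw [hX3]; exact h'.2⟩
    · rcases cover 2 0 1 (by decide) (by decide) (by decide) S2 hS2c u v huv h with
        h' | h' | h' | h'
      · exact ⟨4, by rw [hX4]; exact h'.1, by rw [hX4]; exact h'.2⟩
      · exact ⟨0, by rw [hX0]; exact h'.1, by rw [hX0]; exact h'.2⟩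
      · exact ⟨2, by rw [hX2]; exact h'.1, by rw [hX2]; exact h'.2⟩
      · exact ⟨5, by rw [hX5]; exact h'.1, by rw [hX5]; exact h'.2⟩

/-- Builder's six-set covering for trees: for every 3-coloring of `E(K_n)` there are
six vertex sets, two (disjoint ones) per color, each empty or contained in a single
connected component of the corresponding color graph, such that every pair of
distinct vertices lies together in one of the six sets. -/
theorem six_cover_exists (n : ℕ) (hn : 1 ≤ n) (χ : Sym2 (Fin n) → Fin 3) :
    ∃ X : Fin 6 → Set (Fin n),
      (∀ x ∈ X 0, ∀ y ∈ X 0, (colorGraph χ 0).Reachable x y) ∧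
      (∀ x ∈ X 1, ∀ y ∈ X 1, (colorGraph χ 0).Reachable x y) ∧
      Disjoint (X 0) (X 1) ∧
      (∀ x ∈ X 2, ∀ y ∈ X 2, (colorGraph χ 1).Reachable x y) ∧
      (∀ x ∈ X 3, ∀ y ∈ X 3, (colorGraph χ 1).Reachable x y) ∧
      Disjoint (X 2) (X 3) ∧
      (∀ x ∈ X 4, ∀ y ∈ X 4, (colorGraph χ 2).Reachable x y) ∧
      (∀ x ∈ X 5, ∀ y ∈ X 5, (colorGraph χ 2).Reachable x y) ∧
      Disjoint (X 4) (X 5) ∧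
      (∀ x y : Fin n, x ≠ y → ∃ i : Fin 6, x ∈ X i ∧ y ∈ X i) := by
  have htot : ∀ u v : Fin n, u ≠ v →
      (colorGraph χ 0).Reachable u v ∨ (colorGraph χ 1).Reachable u v ∨
        (colorGraph χ 2).Reachable u v := by
    intro u v huv
    have hadj : (colorGraph χ (χ s(u, v))).Adj u v := by
      rw [colorGraph, SimpleGraph.fromEdgeSet_adj]
      exact ⟨rfl, huv⟩
    rcases fin3_mem (χ s(u, v)) with hc | hc | hc
    · exact Or.inl (hc ▸ hadj.reachable)
    · exact Or.inr (Or.inl (hc ▸ hadj.reachable))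
    · exact Or.inr (Or.inr (hc ▸ hadj.reachable))
  exact six_cover_rel (fun c a b => (colorGraph χ c).Reachable a b)
    (fun c v => SimpleGraph.Reachable.refl v)
    (fun c u v h => h.symm)
    (fun c u v w h1 h2 => h1.trans h2)
    htot ⟨0, hn⟩
end

section
/- For every integer n ≥ 3 and every 3-coloring χ of E(K_n), there is a color c ∈ {1,2,3} such that some connected component of the color-c graph contains at least k(n) vertices. In particular, χ contains a monochromatic tree on at least k(n) vertices. -/
namespace GG

lemma fin3_ne0 {c : Fin 3} (h : c ≠ 0) : c = 1 ∨ c = 2 := by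
  fin_cases c <;> simp_all

lemma fin3_ne12 {c : Fin 3} (h1 : c ≠ 1) (h2 : c ≠ 2) : c = 0 := by
  fin_cases c <;> simp_all

lemma card_inter_contra {n K : ℕ} (hK : 2 * K ≤ n + 2) {U1 U2 : Set (Fin n)}
    (h1 : U1.ncard < K) (h2 : U2.ncard < K)
    (huniv : ∀ x, x ∈ U1 ∪ U2) (hx : (U1 ∩ U2).Nonempty) : False := by
  have he : U1 ∪ U2 = Set.univ := Set.eq_univ_of_forall huniv
  have hsum := Set.ncard_union_add_ncard_inter U1 U2
  rw [he] at hsum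
  have hu : (Set.univ : Set (Fin n)).ncard = n := by simp [Set.ncard_univ]
  rw [hu] at hsum
  have hpos : 0 < (U1 ∩ U2).ncard := (Set.ncard_pos (Set.toFinite _)).mpr hx
  omega

lemma key_ineq {n : ℕ} {D Bi Bj X Y : Set (Fin n)} (hiX : Bi ⊆ X) (hiY : Bi ⊆ Y)
    (hD : D ⊆ X ∪ Y) (hDi : Disjoint D Bi) (hDj : Disjoint D Bj) (hij : Disjoint Bi Bj) :
    D.ncard + 2 * Bi.ncard + ((X ∪ Y) ∩ Bj).ncard ≤ X.ncard + Y.ncard := by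
  have hMj : (X ∪ Y) ∩ Bj ⊆ Bj := Set.inter_subset_right
  have hsub : D ∪ Bi ∪ ((X ∪ Y) ∩ Bj) ⊆ X ∪ Y := by
    intro x hx
    rcases hx with (hx | hx) | hx
    · exact hD hx
    · exact Or.inl (hiX hx)
    · exact hx.1
  have hd1 : Disjoint (D ∪ Bi) ((X ∪ Y) ∩ Bj) :=
    Set.disjoint_union_left.mpr ⟨hDj.mono_right hMj, hij.mono_right hMj⟩
  have hc1 : (D ∪ Bi ∪ ((X ∪ Y) ∩ Bj)).ncard
      = D.ncard + Bi.ncard + ((X ∪ Y) ∩ Bj).ncard := by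
    rw [Set.ncard_union_eq hd1, Set.ncard_union_eq hDi]
  have h2 : Bi.ncard ≤ (X ∩ Y).ncard :=
    Set.ncard_le_ncard (Set.subset_inter hiX hiY) (Set.toFinite _)
  have h3 := Set.ncard_union_add_ncard_inter X Y
  have h4 : (D ∪ Bi ∪ ((X ∪ Y) ∩ Bj)).ncard ≤ (X ∪ Y).ncard :=
    Set.ncard_le_ncard hsub (Set.toFinite _)
  omega

lemma main {n : ℕ} (hn : 3 ≤ n) (χ : Sym2 (Fin n) → Fin 3)
    (C : Fin 3 → Fin n → Set (Fin n))
    (hself : ∀ c v, v ∈ C c v)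
    (hstep : ∀ c v u w, u ∈ C c v → χ s(u, w) = c → u ≠ w → w ∈ C c v)
    (hlt : ∀ c v, (C c v).ncard < kfun n) : False := by
  have hK2 : 2 * kfun n ≤ n + 2 := by unfold kfun; split <;> omega
  have huniv : (Set.univ : Set (Fin n)).ncard = n := by simp [Set.ncard_univ]
  have hv0lt : 0 < n := by omega
  set v0 : Fin n := ⟨0, hv0lt⟩ with hv0def
  have hDlt := hlt 0 v0
  have hDc_ne : (C 0 v0)ᶜ.Nonempty := by
    rcases Set.eq_empty_or_nonempty (C 0 v0)ᶜ with h | h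
    · exfalso
      have hDu : C 0 v0 = Set.univ := by rwa [Set.compl_empty_iff] at h
      rw [hDu, huniv] at hDlt
      omega
    · exact h
  have hneDc : ∀ u ∈ C 0 v0, ∀ v ∈ (C 0 v0)ᶜ, u ≠ v := fun u hu v hv h => hv (h ▸ hu)
  have hcross : ∀ u ∈ C 0 v0, ∀ v ∈ (C 0 v0)ᶜ, χ s(u, v) = 1 ∨ χ s(u, v) = 2 := by
    intro u hu v hv
    exact fin3_ne0 fun h0 => hv (hstep 0 v0 u v hu h0 (hneDc u hu v hv))
  set B1 : Set (Fin n) := {b | b ∈ (C 0 v0)ᶜ ∧ χ s(v0, b) = 1} with hB1def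
  set B2 : Set (Fin n) := {b | b ∈ (C 0 v0)ᶜ ∧ χ s(v0, b) = 2} with hB2def
  have hB1mem : ∀ b, b ∈ B1 ↔ b ∈ (C 0 v0)ᶜ ∧ χ s(v0, b) = 1 := fun b => by
    rw [hB1def]; exact Iff.rfl
  have hB2mem : ∀ b, b ∈ B2 ↔ b ∈ (C 0 v0)ᶜ ∧ χ s(v0, b) = 2 := fun b => by
    rw [hB2def]; exact Iff.rfl
  have hB12 : B1 ∪ B2 = (C 0 v0)ᶜ := by
    ext b
    constructor
    · rintro (hb | hb)
      · exact ((hB1mem b).mp hb).1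
      · exact ((hB2mem b).mp hb).1
    · intro hb
      rcases hcross v0 (hself 0 v0) b hb with h | h
      · exact Or.inl ((hB1mem b).mpr ⟨hb, h⟩)
      · exact Or.inr ((hB2mem b).mpr ⟨hb, h⟩)
  have hDB1 : Disjoint (C 0 v0) B1 :=
    Set.disjoint_left.mpr fun x hx hx1 => ((hB1mem x).mp hx1).1 hx
  have hDB2 : Disjoint (C 0 v0) B2 :=
    Set.disjoint_left.mpr fun x hx hx2 => ((hB2mem x).mp hx2).1 hx
  have hB1B2 : Disjoint B1 B2 := by
    rw [Set.disjoint_left]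
    intro x h1 h2
    have e1 := ((hB1mem x).mp h1).2
    have e2 := ((hB2mem x).mp h2).2
    rw [e1] at e2
    exact absurd e2 (by decide)
  have hB1S : B1 ⊆ C 1 v0 := fun b hb =>
    hstep 1 v0 v0 b (hself 1 v0) ((hB1mem b).mp hb).2
      (hneDc v0 (hself 0 v0) b ((hB1mem b).mp hb).1)
  have hB2T : B2 ⊆ C 2 v0 := fun b hb =>
    hstep 2 v0 v0 b (hself 2 v0) ((hB2mem b).mp hb).2
      (hneDc v0 (hself 0 v0) b ((hB2mem b).mp hb).1)
  by_cases hW : ∀ u ∈ C 0 v0, u ∈ C 1 v0 ∪ C 2 v0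
  · refine card_inter_contra hK2 (hlt 1 v0) (hlt 2 v0) (fun x => ?_)
      ⟨v0, hself 1 v0, hself 2 v0⟩
    by_cases hx : x ∈ C 0 v0
    · exact hW x hx
    · have hxc : x ∈ B1 ∪ B2 := by rw [hB12]; exact hx
      rcases hxc with h | h
      · exact Or.inl (hB1S h)
      · exact Or.inr (hB2T h)
  · push_neg at hW
    obtain ⟨w, hwD, hwST⟩ := hW
    have hwS : w ∉ C 1 v0 := fun h => hwST (Or.inl h)
    have hwT : w ∉ C 2 v0 := fun h => hwST (Or.inr h)
    have hw1 : ∀ b ∈ B1, χ s(w, b) = 2 := by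
      intro b hb
      have hbc := ((hB1mem b).mp hb).1
      rcases hcross w hwD b hbc with h | h
      · exfalso
        apply hwS
        rw [Sym2.eq_swap] at h
        exact hstep 1 v0 b w (hB1S hb) h (Ne.symm (hneDc w hwD b hbc))
      · exact h
    have hw2 : ∀ b ∈ B2, χ s(w, b) = 1 := by
      intro b hb
      have hbc := ((hB2mem b).mp hb).1
      rcases hcross w hwD b hbc with h | h
      · exact h
      · exfalso
        apply hwT
        rw [Sym2.eq_swap] at h
        exact hstep 2 v0 b w (hB2T hb) h (Ne.symm (hneDc w hwD b hbc))
    have hB2S' : B2 ⊆ C 1 w := fun b hb =>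
      hstep 1 w w b (hself 1 w) (hw2 b hb) (hneDc w hwD b ((hB2mem b).mp hb).1)
    have hB1T' : B1 ⊆ C 2 w := fun b hb =>
      hstep 2 w w b (hself 2 w) (hw1 b hb) (hneDc w hwD b ((hB1mem b).mp hb).1)
    rcases Set.eq_empty_or_nonempty B1 with hB1e | ⟨b1, hb1⟩
    · have hB2eq : B2 = (C 0 v0)ᶜ := by rw [← hB12, hB1e, Set.empty_union]
      obtain ⟨bb, hbb⟩ := hDc_ne
      have hbbB2 : bb ∈ B2 := by rw [hB2eq]; exact hbb
      refine card_inter_contra hK2 (hlt 1 w) (hlt 2 v0) (fun x => ?_)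
        ⟨bb, hB2S' hbbB2, hB2T hbbB2⟩
      by_cases hx : x ∈ C 0 v0
      · rcases hcross x hx bb hbb with h | h
        · rw [Sym2.eq_swap] at h
          exact Or.inl (hstep 1 w bb x (hB2S' hbbB2) h (Ne.symm (hneDc x hx bb hbb)))
        · rw [Sym2.eq_swap] at h
          exact Or.inr (hstep 2 v0 bb x (hB2T hbbB2) h (Ne.symm (hneDc x hx bb hbb)))
      · have hxB2 : x ∈ B2 := by rw [hB2eq]; exact hx
        exact Or.inl (hB2S' hxB2)
    rcases Set.eq_empty_or_nonempty B2 with hB2e | ⟨b2, hb2⟩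
    · have hB1eq : B1 = (C 0 v0)ᶜ := by rw [← hB12, hB2e, Set.union_empty]
      obtain ⟨bb, hbb⟩ := hDc_ne
      have hbbB1 : bb ∈ B1 := by rw [hB1eq]; exact hbb
      refine card_inter_contra hK2 (hlt 1 v0) (hlt 2 w) (fun x => ?_)
        ⟨bb, hB1S hbbB1, hB1T' hbbB1⟩
      by_cases hx : x ∈ C 0 v0
      · rcases hcross x hx bb hbb with h | h
        · rw [Sym2.eq_swap] at h
          exact Or.inl (hstep 1 v0 bb x (hB1S hbbB1) h (Ne.symm (hneDc x hx bb hbb)))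
        · rw [Sym2.eq_swap] at h
          exact Or.inr (hstep 2 w bb x (hB1T' hbbB1) h (Ne.symm (hneDc x hx bb hbb)))
      · have hxB1 : x ∈ B1 := by rw [hB1eq]; exact hx
        exact Or.inl (hB1S hxB1)
    have hb1c := ((hB1mem b1).mp hb1).1
    have hb2c := ((hB2mem b2).mp hb2).1
    have hDST' : C 0 v0 ⊆ C 1 v0 ∪ C 2 w := by
      intro x hx
      rcases hcross x hx b1 hb1c with h | h
      · rw [Sym2.eq_swap] at h
        exact Or.inl (hstep 1 v0 b1 x (hB1S hb1) h (Ne.symm (hneDc x hx b1 hb1c)))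
      · rw [Sym2.eq_swap] at h
        exact Or.inr (hstep 2 w b1 x (hB1T' hb1) h (Ne.symm (hneDc x hx b1 hb1c)))
    have hDS'T : C 0 v0 ⊆ C 1 w ∪ C 2 v0 := by
      intro x hx
      rcases hcross x hx b2 hb2c with h | h
      · rw [Sym2.eq_swap] at h
        exact Or.inl (hstep 1 w b2 x (hB2S' hb2) h (Ne.symm (hneDc x hx b2 hb2c)))
      · rw [Sym2.eq_swap] at h
        exact Or.inr (hstep 2 v0 b2 x (hB2T hb2) h (Ne.symm (hneDc x hx b2 hb2c)))
    have k1 := key_ineq hB1S hB1T' hDST' hDB1 hDB2 hB1B2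
    have k2 := key_ineq hB2S' hB2T hDS'T hDB2 hDB1 hB1B2.symm
    have c1 := hlt 1 v0
    have c2 := hlt 2 v0
    have c3 := hlt 1 w
    have c4 := hlt 2 w
    have hcompl : (C 0 v0).ncard + (C 0 v0)ᶜ.ncard = n := by
      rw [Set.ncard_add_ncard_compl]
      simp
    have hBc : (C 0 v0)ᶜ.ncard = B1.ncard + B2.ncard := by
      rw [← hB12, Set.ncard_union_eq hB1B2]
    by_cases hmod : n % 4 = 2
    · have hkval : kfun n = n / 2 + 1 := by rw [kfun, if_pos hmod]
      have he1 : ((C 1 v0 ∪ C 2 w) ∩ B2).ncard = 0 := by omega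
      have he2 : ((C 1 w ∪ C 2 v0) ∩ B1).ncard = 0 := by omega
      have he1' : (C 1 v0 ∪ C 2 w) ∩ B2 = ∅ := (Set.ncard_eq_zero (Set.toFinite _)).mp he1
      have he2' : (C 1 w ∪ C 2 v0) ∩ B1 = ∅ := (Set.ncard_eq_zero (Set.toFinite _)).mp he2
      have hSB2 : ∀ y ∈ B2, y ∉ C 1 v0 := fun y hy hyS =>
        (Set.eq_empty_iff_forall_notMem.mp he1' y) ⟨Or.inl hyS, hy⟩
      have hTB1 : ∀ x ∈ B1, x ∉ C 2 v0 := fun x hx hxT =>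
        (Set.eq_empty_iff_forall_notMem.mp he2' x) ⟨Or.inr hxT, hx⟩
      have hneB : ∀ x ∈ B1, ∀ y ∈ B2, x ≠ y :=
        fun x hx y hy h => Set.disjoint_left.mp hB1B2 hx (h ▸ hy)
      have hcol0 : ∀ x ∈ B1, ∀ y ∈ B2, χ s(x, y) = 0 := by
        intro x hx y hy
        refine fin3_ne12 (fun h1 => ?_) (fun h2 => ?_)
        · exact hSB2 y hy (hstep 1 v0 x y (hB1S hx) h1 (hneB x hx y hy))
        · rw [Sym2.eq_swap] at h2
          exact hTB1 x hx (hstep 2 v0 y x (hB2T hy) h2 (Ne.symm (hneB x hx y hy)))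
      have hsub : (C 0 v0)ᶜ ⊆ C 0 b2 := by
        intro x hx
        have hx' : x ∈ B1 ∪ B2 := by rw [hB12]; exact hx
        rcases hx' with hx1 | hx2
        · have h := hcol0 x hx1 b2 hb2
          rw [Sym2.eq_swap] at h
          exact hstep 0 b2 b2 x (hself 0 b2) h (Ne.symm (hneB x hx1 b2 hb2))
        · by_cases hxb : x = b2
          · rw [hxb]; exact hself 0 b2
          · have hm1 : b1 ∈ C 0 b2 := by
              have h := hcol0 b1 hb1 b2 hb2
              rw [Sym2.eq_swap] at h
              exact hstep 0 b2 b2 b1 (hself 0 b2) h (Ne.symm (hneB b1 hb1 b2 hb2))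
            exact hstep 0 b2 b1 x hm1 (hcol0 b1 hb1 x hx2) (hneB b1 hb1 x hx2)
      have hle : (C 0 v0)ᶜ.ncard ≤ (C 0 b2).ncard :=
        Set.ncard_le_ncard hsub (Set.toFinite _)
      have c5 := hlt 0 b2
      omega
    · have hkval : kfun n = (n + 1) / 2 := by rw [kfun, if_neg hmod]
      omega

end GG

/-- Gerencsér–Gyárfás: for `n ≥ 3`, every 3-coloring of `E(K_n)` has a color `c`
such that some connected component of the color-`c` graph has at least `k(n)`
vertices (hence a monochromatic tree on at least `k(n)` vertices). -/
theorem gerencser_gyarfas (n : ℕ) (hn : 3 ≤ n) (χ : Sym2 (Fin n) → Fin 3) :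
    ∃ c : Fin 3, ∃ v : Fin n,
      kfun n ≤ {u : Fin n | (colorGraph χ c).Reachable v u}.ncard := by
  by_contra hcon
  push_neg at hcon
  exact GG.main hn χ (fun c v => {u | (colorGraph χ c).Reachable v u})
    (fun c v => SimpleGraph.Reachable.refl v)
    (fun c v u w hu hc hne => SimpleGraph.Reachable.trans hu
      (SimpleGraph.Adj.reachable (by
        simp only [colorGraph, SimpleGraph.fromEdgeSet_adj, Set.mem_setOf_eq]
        exact ⟨hc, hne⟩)))
    (fun c v => hcon c v)
end

section
/- For every integer n ≥ 3, there exists a 3-coloring χ of E(K_n) such that for every color c ∈ {1,2,3}, every connected component of the color-c graph contains at most k(n) vertices. -/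
theorem SimpleGraph.Reachable.apply_eq_of_forall_adj {V β : Type*} {G : SimpleGraph V}
    {g : V → β} (hg : ∀ ⦃u v⦄, G.Adj u v → g u = g v) {u v : V} (h : G.Reachable u v) :
    g u = g v := by
  rw [SimpleGraph.reachable_iff_reflTransGen] at h
  exact Relation.reflTransGen_eq_self.le _ _ (h.lift g hg)

/-- The proper 3-edge-colouring of `K₄`: with `Fin 4` read as `(ℤ/2)²` under `^^^`, the edge
`{a, b}` gets the colour `a ^^^ b ≠ 0`, shifted down to `Fin 3` (loops get colour `0`). -/
def k4Color : Sym2 (Fin 4) → Fin 3 :=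
  Sym2.lift ⟨fun a b => ⟨(a ^^^ b).val - 1, by omega⟩,
    fun a b => by simp only [Fin.xor_comm]⟩

def k4Block (c : Fin 3) (a : Fin 4) : Sym2 (Fin 4) := s(a, a ^^^ c.succ)

theorem k4Block_eq_of_k4Color_eq {c : Fin 3} {a b : Fin 4} (h : k4Color s(a, b) = c) :
    k4Block c a = k4Block c b := by
  revert a b c; decide

theorem k4Block_eq_k4Block_iff {c : Fin 3} {a b : Fin 4} :
    k4Block c a = k4Block c b ↔ b = a ∨ b = a ^^^ c.succ := by
  revert a b c; decide

theorem self_ne_xor_succ (c : Fin 3) (a : Fin 4) : a ≠ a ^^^ c.succ := by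
  revert a c; decide

theorem Fin.ncard_setOf_val (n : ℕ) (p : ℕ → Prop) [DecidablePred p] :
    {u : Fin n | p u}.ncard = Nat.count p n := by
  rw [Nat.count_eq_card_filter_range, ← Set.ncard_coe_finset,
    ← Set.ncard_image_of_injective _ Fin.val_injective]
  congr 1
  ext k
  simp [Fin.exists_iff, and_comm]

theorem ncard_setOf_modEq_four_le (n : ℕ) {a b : ℕ} (hab : a % 4 ≠ b % 4) :
    {u : Fin n | (u : ℕ) ≡ a [MOD 4] ∨ (u : ℕ) ≡ b [MOD 4]}.ncard ≤ kfun n := by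
  rw [Set.ofPred_or]
  refine (Set.ncard_union_le _ _).trans ?_
  rw [Fin.ncard_setOf_val n (· ≡ a [MOD 4]), Fin.ncard_setOf_val n (· ≡ b [MOD 4]),
    Nat.count_modEq_card _ (by norm_num), Nat.count_modEq_card _ (by norm_num), kfun]
  split_ifs <;> omega

theorem ncard_setOf_ofNat_four_le (n : ℕ) {a b : Fin 4} (hab : a ≠ b) :
    {u : Fin n | Fin.ofNat 4 u = a ∨ Fin.ofNat 4 u = b}.ncard ≤ kfun n := by
  convert ncard_setOf_modEq_four_le n (a := a) (b := b) (by omega) using 5 <;>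
    simp [Fin.ext_iff, Nat.ModEq, Nat.mod_eq_of_lt]

theorem reachable_k4Blowup_subset {V : Type*} (label : V → Fin 4) (c : Fin 3) (v : V) :
    {u | (SimpleGraph.fromEdgeSet {e | k4Color (e.map label) = c}).Reachable v u} ⊆
      {u | label u = label v ∨ label u = label v ^^^ c.succ} := fun _ hu =>
  k4Block_eq_k4Block_iff.1 <| hu.apply_eq_of_forall_adj (g := k4Block c ∘ label)
    fun _ _ hxy => k4Block_eq_of_k4Color_eq ((SimpleGraph.fromEdgeSet_adj _).1 hxy).1

theorem gerencser_gyarfas_sharp_general (n : ℕ) :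
    ∃ χ : Sym2 (Fin n) → Fin 3, ∀ c : Fin 3, ∀ v : Fin n,
      {u : Fin n | (colorGraph χ c).Reachable v u}.ncard ≤ kfun n := by
  let label : Fin n → Fin 4 := fun u => Fin.ofNat 4 u
  refine ⟨fun e => k4Color (e.map label), fun c v => ?_⟩
  calc {u | (colorGraph _ c).Reachable v u}.ncard
      ≤ {u | label u = label v ∨ label u = label v ^^^ c.succ}.ncard :=
        Set.ncard_le_ncard (reachable_k4Blowup_subset label c v)
    _ ≤ kfun n := ncard_setOf_ofNat_four_le n (self_ne_xor_succ c (label v))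

/-- Sharpness of the Gerencsér–Gyárfás theorem: for every `n ≥ 3` there is a
3-coloring of `E(K_n)` in which every monochromatic connected component has at
most `k(n)` vertices. -/
theorem gerencser_gyarfas_sharp (n : ℕ) (hn : 3 ≤ n) :
    ∃ χ : Sym2 (Fin n) → Fin 3, ∀ c : Fin 3, ∀ v : Fin n,
      {u : Fin n | (colorGraph χ c).Reachable v u}.ncard ≤ kfun n :=
  gerencser_gyarfas_sharp_general n
end

section
/- Let n ≥ 4 and suppose the vertex set of K_n is partitioned into nonempty sets V_1, V_2, V_3, V_4. Let χ be any 3-coloring of E(K_n) such that every edge between V_1 and V_2 and every edge between V_3 and V_4 has color 1; every edge between V_1 and V_3 and every edge between V_2 and V_4 has color 2; and every edge between V_1 and V_4 and every edge between V_2 and V_3 has color 3 (edges inside a part V_i may have any color). Then for every edge e whose two endpoints lie in different parts and every color c ∈ {1,2,3} with c ≠ χ(e), the coloring χ_{e,c} that agrees with χ except that e receives color c has the property that its color-c graph is connected on all n vertices; in particular χ_{e,c} contains a monochromatic spanning tree in color c. -/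
/-- The partner part of part `i` in color `c`. -/
def matchPart : Fin 3 → Fin 4 → Fin 4 := ![![1,0,3,2], ![2,3,0,1], ![3,2,1,0]]

lemma matchPart_ne (c : Fin 3) (i : Fin 4) : matchPart c i ≠ i := by revert c i; decide

lemma matchPart_invol (c : Fin 3) (i : Fin 4) : matchPart c (matchPart c i) = i := by revert c i; decide

lemma cover (c : Fin 3) (a b : Fin 4) (hab : a ≠ b) (hma : matchPart c a ≠ b) :
    ∀ i : Fin 4, i = a ∨ i = b ∨ i = matchPart c a ∨ i = matchPart c b := by
  revert hab hma; revert c a b; decide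

/-- Painter's blow-up coloring for trees: partition the vertices of `K_n` into
nonempty parts `V₁, V₂, V₃, V₄` (here `p v` is the index of the part of `v`), and color
the cross edges by the proper 3-edge-coloring of `K₄` (edges inside parts arbitrary).
Then recoloring any cross edge `e` with any color `c ≠ χ(e)` makes the color-`c`
graph connected on all `n` vertices, hence creates a spanning tree in color `c`. -/
theorem blowup_recolor_connected (n : ℕ) (hn : 4 ≤ n) (p : Fin n → Fin 4)
    (hsurj : Function.Surjective p)
    (χ : Sym2 (Fin n) → Fin 3)
    (h1 : ∀ x y : Fin n, ((p x = 0 ∧ p y = 1) ∨ (p x = 2 ∧ p y = 3)) → χ s(x, y) = 0)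
    (h2 : ∀ x y : Fin n, ((p x = 0 ∧ p y = 2) ∨ (p x = 1 ∧ p y = 3)) → χ s(x, y) = 1)
    (h3 : ∀ x y : Fin n, ((p x = 0 ∧ p y = 3) ∨ (p x = 1 ∧ p y = 2)) → χ s(x, y) = 2) :
    ∀ x y : Fin n, x ≠ y → p x ≠ p y → ∀ c : Fin 3, c ≠ χ s(x, y) →
      (colorGraph (Function.update χ s(x, y) c) c).Connected := by
  intro x y hxy hpxy c hc
  have h4 : ∀ i : Fin 4, i = 0 ∨ i = 1 ∨ i = 2 ∨ i = 3 := by decide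
  have h3' : ∀ j : Fin 3, j = 0 ∨ j = 1 ∨ j = 2 := by decide
  -- key: matched cross pairs have color c
  have key : ∀ u v : Fin n, p v = matchPart c (p u) → χ s(u, v) = c := by
    intro u v huv
    rcases h3' c with hC | hC | hC <;> subst hC <;>
      rcases h4 (p u) with hu | hu | hu | hu <;>
        rw [hu] at huv <;> simp [matchPart] at huv <;>
          first
          | exact h1 u v (Or.inl ⟨hu, huv⟩)
          | exact h1 u v (Or.inr ⟨hu, huv⟩)
          | exact h2 u v (Or.inl ⟨hu, huv⟩)
          | exact h2 u v (Or.inr ⟨hu, huv⟩)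
          | exact h3 u v (Or.inl ⟨hu, huv⟩)
          | exact h3 u v (Or.inr ⟨hu, huv⟩)
          | (rw [Sym2.eq_swap];
             first
             | exact h1 v u (Or.inl ⟨huv, hu⟩)
             | exact h1 v u (Or.inr ⟨huv, hu⟩)
             | exact h2 v u (Or.inl ⟨huv, hu⟩)
             | exact h2 v u (Or.inr ⟨huv, hu⟩)
             | exact h3 v u (Or.inl ⟨huv, hu⟩)
             | exact h3 v u (Or.inr ⟨huv, hu⟩))
  set χ' := Function.update χ s(x, y) c with hχ'
  set G := colorGraph χ' c with hG
  -- adjacency from matched parts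
  have adjM : ∀ u v : Fin n, p v = matchPart c (p u) → G.Adj u v := by
    intro u v huv
    have hne : u ≠ v := by
      intro h; rw [h] at huv; exact matchPart_ne c (p v) huv.symm
    have : χ' s(u, v) = c := by
      rcases eq_or_ne (s(u, v) : Sym2 (Fin n)) s(x, y) with h | h
      · rw [hχ', h, Function.update_self]
      · rw [hχ', Function.update_of_ne h]; exact key u v huv
    exact (SimpleGraph.fromEdgeSet_adj _).mpr ⟨this, hne⟩
  have adjE : G.Adj x y := by
    exact (SimpleGraph.fromEdgeSet_adj _).mpr ⟨Function.update_self _ _ _, hxy⟩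
  -- the edge's parts are not matched in color c
  have hnm : matchPart c (p x) ≠ p y := by
    intro h; exact hc (key x y h.symm).symm
  -- reachability of every vertex from x
  have reach : ∀ u : Fin n, G.Reachable x u := by
    intro u
    rcases cover c (p x) (p y) hpxy hnm (p u) with hu | hu | hu | hu
    · -- same part as x
      rcases eq_or_ne u x with h | h
      · rw [h]
      · obtain ⟨w, hw⟩ := hsurj (matchPart c (p x))
        have h1 : G.Adj x w := adjM x w hw
        have h2 : G.Adj w u := adjM w u (by rw [hw, matchPart_invol, hu])
        exact h1.reachable.trans h2.reachable
    · -- same part as y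
      rcases eq_or_ne u y with h | h
      · rw [h]; exact adjE.reachable
      · obtain ⟨w, hw⟩ := hsurj (matchPart c (p y))
        have h1 : G.Adj y w := adjM y w hw
        have h2 : G.Adj w u := adjM w u (by rw [hw, matchPart_invol, hu])
        exact adjE.reachable.trans (h1.reachable.trans h2.reachable)
    · exact (adjM x u hu).reachable
    · exact adjE.reachable.trans (adjM y u hu).reachable
  have hne : Nonempty (Fin n) := ⟨⟨0, by omega⟩⟩
  haveI := hne
  exact SimpleGraph.Connected.mk fun u v => (reach u).symm.trans (reach v)
end

section
/- For all integers k and t with 2 ≤ k ≤ t, (2k − 1 + (k−3)·lg(k−2))/(k+1) ≤ (2t − 1 + (t−3)·lg(t−2))/(t+1), where lg denotes the base-2 logarithm with the convention lg 0 = 0. -/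
lemma q_diag_step (n : ℕ) (hn : 2 ≤ n) :
    (2 * (n : ℝ) - 1 + ((n : ℝ) - 3) * Real.logb 2 ((n : ℝ) - 2)) / ((n : ℝ) + 1) ≤
      (2 * ((n : ℝ) + 1) - 1 + (((n : ℝ) + 1) - 3) * Real.logb 2 (((n : ℝ) + 1) - 2)) /
        (((n : ℝ) + 1) + 1) := by
  rcases eq_or_lt_of_le hn with h | h
  · subst h
    norm_num
  · have hx : (3 : ℝ) ≤ (n : ℝ) := by exact_mod_cast h
    set x : ℝ := (n : ℝ)
    have hL1 : 0 ≤ Real.logb 2 (x - 2) := Real.logb_nonneg (by norm_num) (by linarith)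
    have hL12 : Real.logb 2 (x - 2) ≤ Real.logb 2 (x + 1 - 2) :=
      by gcongr <;> norm_num <;> linarith
    set L1 := Real.logb 2 (x - 2)
    set L2 := Real.logb 2 (x + 1 - 2)
    rw [div_le_div_iff₀ (by linarith) (by linarith)]
    nlinarith [mul_nonneg (show (0:ℝ) ≤ (x - 3) * (x + 2) by nlinarith) (sub_nonneg.mpr hL12),
      mul_nonneg (le_trans hL1 hL12) (show (0:ℝ) ≤ 4 by norm_num)]

/-- For `2 ≤ k ≤ t`, `(2k − 1 + (k−3)·lg(k−2))/(k+1) ≤ (2t − 1 + (t−3)·lg(t−2))/(t+1)`,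
where `lg = Real.logb 2` (so `lg 0 = 0`). -/
theorem q_diag_monotone (k t : ℕ) (hk : 2 ≤ k) (hkt : k ≤ t) :
    (2 * (k : ℝ) - 1 + ((k : ℝ) - 3) * Real.logb 2 ((k : ℝ) - 2)) / ((k : ℝ) + 1) ≤
      (2 * (t : ℝ) - 1 + ((t : ℝ) - 3) * Real.logb 2 ((t : ℝ) - 2)) / ((t : ℝ) + 1) := by
  induction t, hkt using Nat.le_induction with
  | base => exact le_refl _
  | succ n hn ih =>
    refine ih.trans ?_
    have := q_diag_step n (hk.trans hn)
    push_cast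
    convert this using 3 <;> push_cast <;> ring
end
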